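/- arXiv:2208.03439 — 4 statements merged into one kernel-verified Lean document; each statement's English description precedes it below -/
import Mathlib

section
/- (Theorem 1.2, case p = 2, pointwise version.) Let n ≥ 2 and let u : ℝⁿ \ {0} → ℝ be twice continuously differentiable. Write q(x) = ⟨Mx, x⟩ = H(x)², T_H(x) = Mx/q(x), and define the anisotropic Kelvin transform û(x) = u(T_H(x)) · q(x)^{-(n-2)/2}. Then û is twice continuously differentiable on ℝⁿ \ {0} and for every x ≠ 0, tr(M⁻¹ · Hess û(x)) = tr(M · Hess u(T_H(x))) / q(x)^{(n+2)/2}; that is, Δ^{H*} û = ((Δ^H u) ∘ T_H) / H^{n+2} on ℝⁿ \ {0}. -/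
/-!
For `q(x) = ⟨Mx, x⟩` and `T(x) = Mx / q(x)`, the Jacobian of `T` is
`DT(x) = q⁻¹ R M` with `R = I - 2 Mx xᵀ / q`, a reflection satisfying `R M Rᵀ = M`, so
`DT · M⁻¹ · DTᵀ = q⁻² M`: the Kelvin map is conformal for the pair `(M⁻¹, M)`. Hence the
second-order chain rule gives `Δ^{H*}(u ∘ T) = q⁻² (Δ^H u) ∘ T` plus terms that are first order
in `Du(Tx)`. The weight `q^c`, `c = -(n-2)/2`, is `Δ^{H*}`-harmonic, and in the Leibniz rule the
cross terms `2 ⟨D(u ∘ T), D(q^c)⟩_{M⁻¹}` cancel those first-order terms exactly for this `c`,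
which leaves `Δ^{H*} û = q^{c-2} (Δ^H u) ∘ T = (Δ^H u) ∘ T / q^{(n+2)/2}`.
-/

open scoped RealInnerProductSpace

open Filter Topology ContinuousLinearMap

section Hessian

variable {𝕜 : Type*} [NontriviallyNormedField 𝕜]
  {E F G : Type*} [NormedAddCommGroup E] [NormedSpace 𝕜 E] [NormedAddCommGroup F]
  [NormedSpace 𝕜 F] [NormedAddCommGroup G] [NormedSpace 𝕜 G] {x : E}

theorem ContDiffAt.hasFDerivAt_fderiv {f : E → F} (hf : ContDiffAt 𝕜 2 f x) :
    HasFDerivAt (fderiv 𝕜 f) (fderiv 𝕜 (fderiv 𝕜 f) x) x :=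
  ((hf.fderiv_right (m := 1) le_rfl).differentiableAt one_ne_zero).hasFDerivAt

theorem ContDiffAt.eventually_differentiableAt {f : E → F} (hf : ContDiffAt 𝕜 2 f x) :
    ∀ᶠ y in 𝓝 x, DifferentiableAt 𝕜 f y :=
  (hf.eventually (by simp)).mono fun _ hy => hy.differentiableAt two_ne_zero

theorem fderiv_fderiv_mul {f g : E → 𝕜} (hf : ContDiffAt 𝕜 2 f x)
    (hg : ContDiffAt 𝕜 2 g x) :
    fderiv 𝕜 (fderiv 𝕜 fun y => f y * g y) x =
      g x • fderiv 𝕜 (fderiv 𝕜 f) x + (fderiv 𝕜 g x).smulRight (fderiv 𝕜 f x)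
        + (fderiv 𝕜 f x).smulRight (fderiv 𝕜 g x) + f x • fderiv 𝕜 (fderiv 𝕜 g) x := by
  have hD : fderiv 𝕜 (fun y => f y * g y) =ᶠ[𝓝 x]
      fun y => f y • fderiv 𝕜 g y + g y • fderiv 𝕜 f y := by
    filter_upwards [hf.eventually_differentiableAt, hg.eventually_differentiableAt]
      with y hfy hgy using fderiv_mul hfy hgy
  rw [hD.fderiv_eq]
  exact (((hf.differentiableAt two_ne_zero).hasFDerivAt.smul hg.hasFDerivAt_fderiv).add
    ((hg.differentiableAt two_ne_zero).hasFDerivAt.smul hf.hasFDerivAt_fderiv)).fderiv.trans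
    (by abel)

/-- The second term is `Du(Tx) ∘ D²T(x)`, written as the second derivative of the function
`Du(Tx) ∘ T`. -/
theorem fderiv_fderiv_comp {T : E → F} {u : F → G} (hu : ContDiffAt 𝕜 2 u (T x))
    (hT : ContDiffAt 𝕜 2 T x) :
    fderiv 𝕜 (fderiv 𝕜 (u ∘ T)) x =
      (fderiv 𝕜 (fderiv 𝕜 u) (T x)).bilinearComp (fderiv 𝕜 T x) (fderiv 𝕜 T x)
        + fderiv 𝕜 (fderiv 𝕜 (fderiv 𝕜 u (T x) ∘ T)) x := by
  set ℓ := fderiv 𝕜 u (T x)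
  have hTy := hT.eventually_differentiableAt
  have hD₁ : fderiv 𝕜 (u ∘ T) =ᶠ[𝓝 x] fun y => (fderiv 𝕜 u (T y)).comp (fderiv 𝕜 T y) := by
    filter_upwards [hTy, hT.continuousAt.eventually hu.eventually_differentiableAt]
      with y hTy huy using fderiv_comp y huy hTy
  have hD₂ : fderiv 𝕜 (ℓ ∘ T) =ᶠ[𝓝 x] fun y => ℓ.comp (fderiv 𝕜 T y) := by
    filter_upwards [hTy] with y hTy
    rw [fderiv_comp y ℓ.differentiableAt hTy, ℓ.fderiv]
  have hDu : HasFDerivAt (fun y => fderiv 𝕜 u (T y)) _ x :=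
    hu.hasFDerivAt_fderiv.comp x (hT.differentiableAt two_ne_zero).hasFDerivAt
  rw [hD₁.fderiv_eq, hD₂.fderiv_eq, (hDu.clm_comp hT.hasFDerivAt_fderiv).fderiv,
    ((hasFDerivAt_const ℓ x).clm_comp hT.hasFDerivAt_fderiv).fderiv]
  ext h k
  simp [ℓ, add_comm]

theorem ContinuousLinearMap.smul_smulRight (a : 𝕜) (c : E →L[𝕜] 𝕜) (f : F) :
    (a • c).smulRight f = a • c.smulRight f := by
  ext; simp [smul_smul]

theorem ContinuousLinearMap.smulRight_smul (a : 𝕜) (c : E →L[𝕜] 𝕜) (f : E →L[𝕜] 𝕜) :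
    c.smulRight (a • f) = a • c.smulRight f := by
  ext; simp [smul_smul, mul_comm]

theorem ContinuousLinearMap.fderiv_fderiv (f : E →L[𝕜] F) (x : E) :
    fderiv 𝕜 (fderiv 𝕜 f) x = 0 := by
  simp [funext fun y => f.fderiv (x := y)]

end Hessian

section Rpow

variable {E : Type*} [NormedAddCommGroup E] [NormedSpace ℝ E]

theorem fderiv_fderiv_rpow_const {f : E → ℝ} {x : E} (hf : ContDiffAt ℝ 2 f x) (hx : f x ≠ 0)
    (s : ℝ) :
    fderiv ℝ (fderiv ℝ fun y => f y ^ s) x =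
      (s * (s - 1) * f x ^ (s - 2)) • (fderiv ℝ f x).smulRight (fderiv ℝ f x)
        + (s * f x ^ (s - 1)) • fderiv ℝ (fderiv ℝ f) x := by
  have hD : (fderiv ℝ fun y => f y ^ s) =ᶠ[𝓝 x]
      fun y => (s * f y ^ (s - 1)) • fderiv ℝ f y := by
    filter_upwards [hf.eventually_differentiableAt, hf.continuousAt.eventually_ne hx]
      with y hfy hy using (hfy.hasFDerivAt.rpow_const (Or.inl hy)).fderiv
  have hcoef : HasFDerivAt (fun y => s * f y ^ (s - 1))
      (s • ((s - 1) * f x ^ (s - 1 - 1)) • fderiv ℝ f x) x :=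
    ((hf.differentiableAt two_ne_zero).hasFDerivAt.rpow_const (Or.inl hx)).const_smul s
  rw [hD.fderiv_eq]
  refine (hcoef.smul hf.hasFDerivAt_fderiv).fderiv.trans ?_
  rw [add_comm, sub_sub, one_add_one_eq_two]
  ext h k
  simp only [add_apply, smul_apply, smulRight_apply, smul_eq_mul]
  ring

end Rpow

section QuadraticForm

variable {E : Type*} [NormedAddCommGroup E] [InnerProductSpace ℝ E] {L : E →L[ℝ] E}

theorem LinearMap.IsSymmetric.hasFDerivAt_inner_apply_self (hL : (L : E →ₗ[ℝ] E).IsSymmetric)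
    (x : E) : HasFDerivAt (fun y => ⟪L y, y⟫) ((2 : ℝ) • innerSL ℝ (L x)) x := by
  have h : L.reApplyInnerSelf = fun y => ⟪L y, y⟫ :=
    funext fun y => by simp [reApplyInnerSelf_apply]
  have hq := (hL.hasStrictFDerivAt_reApplyInnerSelf x).hasFDerivAt
  rwa [h, two_smul, ← two_smul ℝ] at hq

theorem LinearMap.IsSymmetric.fderiv_fderiv_inner_apply_self (hL : (L : E →ₗ[ℝ] E).IsSymmetric)
    (x : E) : fderiv ℝ (fderiv ℝ fun y => ⟪L y, y⟫) x = (2 : ℝ) • (innerSL ℝ).comp L := by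
  have hD : fderiv ℝ (fun y => ⟪L y, y⟫) =
      ((2 : ℝ) • (innerSL ℝ).comp L : E →L[ℝ] E →L[ℝ] ℝ) := by
    ext1 y
    simp [(hL.hasFDerivAt_inner_apply_self y).fderiv]
  rw [hD, ContinuousLinearMap.fderiv]

end QuadraticForm

section WeightedTrace

open Matrix

variable {ι : Type*} [Fintype ι] [DecidableEq ι]

theorem ContinuousLinearMap.apply_eq_sum_single {F : Type*} [NormedAddCommGroup F]
    [NormedSpace ℝ F] (ℓ : EuclideanSpace ℝ ι →L[ℝ] F) (w : EuclideanSpace ℝ ι) :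
    ℓ w = ∑ i, w i • ℓ (EuclideanSpace.single i 1) := by
  conv_lhs => rw [← (EuclideanSpace.basisFun ι ℝ).sum_repr w]
  simp [map_sum]

/-- `weightedTrace A (fderiv ℝ (fderiv ℝ f) x) = tr (A · Hess f (x))`, so `Δ^{H*} f (x)` and
`Δ^H f (x)` are `weightedTrace M⁻¹` and `weightedTrace M` of the second derivative. -/
noncomputable def weightedTrace (A : Matrix ι ι ℝ)
    (B : EuclideanSpace ℝ ι →L[ℝ] EuclideanSpace ℝ ι →L[ℝ] ℝ) : ℝ :=
  ∑ i, ∑ j, A i j * B (EuclideanSpace.single i 1) (EuclideanSpace.single j 1)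

theorem weightedTrace_add (A : Matrix ι ι ℝ)
    (B₁ B₂ : EuclideanSpace ℝ ι →L[ℝ] EuclideanSpace ℝ ι →L[ℝ] ℝ) :
    weightedTrace A (B₁ + B₂) = weightedTrace A B₁ + weightedTrace A B₂ := by
  simp only [weightedTrace, _root_.add_apply, mul_add, Finset.sum_add_distrib]

theorem weightedTrace_smul (A : Matrix ι ι ℝ) (c : ℝ)
    (B : EuclideanSpace ℝ ι →L[ℝ] EuclideanSpace ℝ ι →L[ℝ] ℝ) :
    weightedTrace A (c • B) = c * weightedTrace A B := by
  simp only [weightedTrace, _root_.smul_apply, smul_eq_mul, Finset.mul_sum]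
  exact Finset.sum_congr rfl fun _ _ => Finset.sum_congr rfl fun _ _ => by ring

theorem weightedTrace_smul_left (c : ℝ) (A : Matrix ι ι ℝ)
    (B : EuclideanSpace ℝ ι →L[ℝ] EuclideanSpace ℝ ι →L[ℝ] ℝ) :
    weightedTrace (c • A) B = c * weightedTrace A B := by
  simp only [weightedTrace, Matrix.smul_apply, smul_eq_mul, Finset.mul_sum]
  exact Finset.sum_congr rfl fun _ _ => Finset.sum_congr rfl fun _ _ => by ring

theorem weightedTrace_innerSL_comp (A P : Matrix ι ι ℝ) :
    weightedTrace A ((innerSL ℝ).comp (toEuclideanCLM (𝕜 := ℝ) P)) = (A * P).trace := by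
  simp [weightedTrace, Matrix.trace, Matrix.mul_apply, EuclideanSpace.inner_single_right]

theorem weightedTrace_innerSL_smulRight (A : Matrix ι ι ℝ) (v : EuclideanSpace ℝ ι)
    (ℓ : EuclideanSpace ℝ ι →L[ℝ] ℝ) :
    weightedTrace A ((innerSL ℝ v).smulRight ℓ) = ℓ (toEuclideanCLM (𝕜 := ℝ) Aᵀ v) := by
  rw [ℓ.apply_eq_sum_single]
  simp [weightedTrace, EuclideanSpace.inner_single_right, mulVec, dotProduct, Finset.sum_mul]
  rw [Finset.sum_comm]
  exact Finset.sum_congr rfl fun _ _ => Finset.sum_congr rfl fun _ _ => by ring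

theorem weightedTrace_smulRight_innerSL (A : Matrix ι ι ℝ) (v : EuclideanSpace ℝ ι)
    (ℓ : EuclideanSpace ℝ ι →L[ℝ] ℝ) :
    weightedTrace A (ℓ.smulRight (innerSL ℝ v)) = ℓ (toEuclideanCLM (𝕜 := ℝ) A v) := by
  rw [ℓ.apply_eq_sum_single]
  simp [weightedTrace, EuclideanSpace.inner_single_right, mulVec, dotProduct, Finset.sum_mul]
  exact Finset.sum_congr rfl fun _ _ => Finset.sum_congr rfl fun _ _ => by ring

theorem weightedTrace_bilinearComp (A P Q : Matrix ι ι ℝ)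
    (B : EuclideanSpace ℝ ι →L[ℝ] EuclideanSpace ℝ ι →L[ℝ] ℝ) :
    weightedTrace A
        (B.bilinearComp (toEuclideanCLM (𝕜 := ℝ) P) (toEuclideanCLM (𝕜 := ℝ) Q)) =
      weightedTrace (P * A * Qᵀ) B := by
  have hB : ∀ i j, B (toEuclideanCLM (𝕜 := ℝ) P (EuclideanSpace.single i 1))
      (toEuclideanCLM (𝕜 := ℝ) Q (EuclideanSpace.single j 1)) =
        ∑ k, ∑ l,
          P k i * Q l j * B (EuclideanSpace.single k 1) (EuclideanSpace.single l 1) := by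
    intro i j
    rw [B.apply_eq_sum_single]
    simp only [_root_.sum_apply, _root_.smul_apply]
    refine Finset.sum_congr rfl fun k _ => ?_
    rw [(B _).apply_eq_sum_single, Finset.smul_sum]
    refine Finset.sum_congr rfl fun l _ => ?_
    simp
    ring
  simp only [weightedTrace, bilinearComp_apply, hB, Finset.mul_sum, Matrix.mul_apply,
    Finset.sum_mul, Matrix.transpose_apply]
  simp only [← Fintype.sum_prod_type']
  exact Fintype.sum_equiv
    ⟨fun x => (x.2.2.1, x.2.2.2, x.2.1, x.1), fun x => (x.2.2.2, x.2.2.1, x.1, x.2.1),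
      fun _ => rfl, fun _ => rfl⟩ _ _ fun _ => by dsimp; ring

end WeightedTrace

section Kelvin

open Matrix

variable {ι : Type*} [Fintype ι] [DecidableEq ι] {M : Matrix ι ι ℝ} {x : EuclideanSpace ℝ ι}

noncomputable def quadForm (M : Matrix ι ι ℝ) (x : EuclideanSpace ℝ ι) : ℝ :=
  ⟪toEuclideanCLM (𝕜 := ℝ) M x, x⟫

noncomputable def kelvinMap (M : Matrix ι ι ℝ) (x : EuclideanSpace ℝ ι) : EuclideanSpace ℝ ι :=
  (quadForm M x)⁻¹ • toEuclideanCLM (𝕜 := ℝ) M x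

noncomputable def kelvinTransform (M : Matrix ι ι ℝ) (u : EuclideanSpace ℝ ι → ℝ)
    (x : EuclideanSpace ℝ ι) : ℝ :=
  u (kelvinMap M x) * quadForm M x ^ (-(((Fintype.card ι : ℝ) - 2) / 2))

noncomputable def kelvinJacobian (M : Matrix ι ι ℝ) (x : EuclideanSpace ℝ ι) : Matrix ι ι ℝ :=
  (quadForm M x)⁻¹ • M - (2 / quadForm M x ^ 2) • vecMulVec (M *ᵥ x.ofLp) (M *ᵥ x.ofLp)

theorem quadForm_eq_dotProduct (M : Matrix ι ι ℝ) (x : EuclideanSpace ℝ ι) :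
    quadForm M x = M *ᵥ x.ofLp ⬝ᵥ x.ofLp := by
  simp [quadForm, EuclideanSpace.inner_eq_star_dotProduct, dotProduct_comm]

theorem quadForm_pos (hM : M.PosDef) (hx : x ≠ 0) : 0 < quadForm M x := by
  rw [quadForm, real_inner_comm, inner_toEuclideanCLM]
  simpa using hM.dotProduct_mulVec_pos (x := x.ofLp) (by simpa using hx)

theorem contDiff_quadForm {n : WithTop ℕ∞} : ContDiff ℝ n (quadForm M) :=
  (toEuclideanCLM (𝕜 := ℝ) M).contDiff.inner ℝ contDiff_id

theorem hasFDerivAt_quadForm (hM : M.IsHermitian) (x : EuclideanSpace ℝ ι) :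
    HasFDerivAt (quadForm M) ((2 : ℝ) • innerSL ℝ (toEuclideanCLM (𝕜 := ℝ) M x)) x :=
  (isSymmetric_toEuclideanLin_iff.mpr hM).hasFDerivAt_inner_apply_self x

theorem fderiv_fderiv_quadForm (hM : M.IsHermitian) (x : EuclideanSpace ℝ ι) :
    fderiv ℝ (fderiv ℝ (quadForm M)) x =
      (2 : ℝ) • (innerSL ℝ).comp (toEuclideanCLM (𝕜 := ℝ) M) :=
  (isSymmetric_toEuclideanLin_iff.mpr hM).fderiv_fderiv_inner_apply_self x

theorem toEuclideanCLM_inv_apply_toEuclideanCLM (hdet : IsUnit M) (x : EuclideanSpace ℝ ι) :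
    toEuclideanCLM (𝕜 := ℝ) M⁻¹ (toEuclideanCLM (𝕜 := ℝ) M x) = x := by
  rw [← mul_apply_eq_comp, ← map_mul, nonsing_inv_mul _ ((isUnit_iff_isUnit_det M).mp hdet),
    map_one, one_apply_eq_self]

theorem weightedTrace_inv_innerSL_smulRight (hM : M.IsHermitian) (hdet : IsUnit M)
    (x : EuclideanSpace ℝ ι) (ℓ : EuclideanSpace ℝ ι →L[ℝ] ℝ) :
    weightedTrace M⁻¹ ((innerSL ℝ (toEuclideanCLM (𝕜 := ℝ) M x)).smulRight ℓ) = ℓ x := by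
  rw [weightedTrace_innerSL_smulRight, transpose_nonsing_inv,
    ← conjTranspose_eq_transpose_of_trivial, hM.eq, toEuclideanCLM_inv_apply_toEuclideanCLM hdet]

theorem weightedTrace_inv_smulRight_innerSL (hdet : IsUnit M)
    (x : EuclideanSpace ℝ ι) (ℓ : EuclideanSpace ℝ ι →L[ℝ] ℝ) :
    weightedTrace M⁻¹ (ℓ.smulRight (innerSL ℝ (toEuclideanCLM (𝕜 := ℝ) M x))) = ℓ x := by
  rw [weightedTrace_smulRight_innerSL, toEuclideanCLM_inv_apply_toEuclideanCLM hdet]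

theorem weightedTrace_inv_hessian_quadForm_rpow (hM : M.IsHermitian) (hdet : IsUnit M)
    (hx : quadForm M x ≠ 0) (s : ℝ) :
    weightedTrace M⁻¹ (fderiv ℝ (fderiv ℝ fun y => quadForm M y ^ s) x) =
      2 * s * (2 * s + Fintype.card ι - 2) * quadForm M x ^ (s - 1) := by
  rw [fderiv_fderiv_rpow_const contDiff_quadForm.contDiffAt hx,
    (hasFDerivAt_quadForm hM x).fderiv, fderiv_fderiv_quadForm hM x, weightedTrace_add,
    weightedTrace_smul, weightedTrace_smul,
    smul_smulRight, weightedTrace_smul, weightedTrace_inv_innerSL_smulRight hM hdet,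
    weightedTrace_smul, weightedTrace_innerSL_comp,
    nonsing_inv_mul _ ((isUnit_iff_isUnit_det M).mp hdet), trace_one, _root_.smul_apply,
    innerSL_apply_apply, ← quadForm, show s - 2 = s - 1 - 1 by ring, Real.rpow_sub_one hx]
  simp only [smul_eq_mul]
  field_simp
  ring

theorem hasFDerivAt_kelvinMap (hM : M.IsHermitian) (hx : quadForm M x ≠ 0) :
    HasFDerivAt (kelvinMap M) (toEuclideanCLM (𝕜 := ℝ) (kelvinJacobian M x)) x := by
  have h := ((hasDerivAt_inv hx).comp_hasFDerivAt x (hasFDerivAt_quadForm hM x)).smul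
    (toEuclideanCLM (𝕜 := ℝ) M).hasFDerivAt
  refine h.congr_fderiv ?_
  ext h i
  simp [kelvinJacobian, vecMulVec_mulVec, EuclideanSpace.inner_eq_star_dotProduct,
    dotProduct_comm]
  ring

theorem kelvinJacobian_apply_self (hx : quadForm M x ≠ 0) :
    toEuclideanCLM (𝕜 := ℝ) (kelvinJacobian M x) x =
      -(quadForm M x)⁻¹ • toEuclideanCLM (𝕜 := ℝ) M x := by
  ext i
  simp only [kelvinJacobian, ofLp_toEuclideanCLM, sub_mulVec, smul_mulVec, vecMulVec_mulVec,
    ← quadForm_eq_dotProduct]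
  simp
  field_simp
  ring

theorem kelvinJacobian_mul_inv_mul_transpose (hM : M.IsHermitian) (hdet : IsUnit M) :
    kelvinJacobian M x * M⁻¹ * (kelvinJacobian M x)ᵀ = (quadForm M x ^ 2)⁻¹ • M := by
  have hdet' := (isUnit_iff_isUnit_det M).mp hdet
  have hMT : Mᵀ = M := by rw [← conjTranspose_eq_transpose_of_trivial]; exact hM.eq
  have hv : M *ᵥ x.ofLp = x.ofLp ᵥ* M := by rw [← vecMul_transpose, hMT]
  have hJT : (kelvinJacobian M x)ᵀ = kelvinJacobian M x := by
    simp [kelvinJacobian, hMT, transpose_vecMulVec]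
  have hJM : kelvinJacobian M x * M⁻¹ =
      (quadForm M x)⁻¹ • 1 - (2 / quadForm M x ^ 2) • vecMulVec (M *ᵥ x.ofLp) x.ofLp := by
    rw [kelvinJacobian, Matrix.sub_mul, Matrix.smul_mul, Matrix.smul_mul,
      mul_nonsing_inv _ hdet', vecMulVec_mul, hv, vecMul_vecMul, mul_nonsing_inv _ hdet',
      vecMul_one]
  have hxJ : vecMulVec (M *ᵥ x.ofLp) x.ofLp * kelvinJacobian M x =
      -(quadForm M x)⁻¹ • vecMulVec (M *ᵥ x.ofLp) (M *ᵥ x.ofLp) := by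
    rw [kelvinJacobian, Matrix.mul_sub, Matrix.mul_smul, Matrix.mul_smul, vecMulVec_mul,
      vecMulVec_mul_vecMulVec, ← hv, dotProduct_comm, ← quadForm_eq_dotProduct, vecMulVec_smul,
      smul_smul]
    field_simp
    module
  rw [hJT, hJM, Matrix.sub_mul, Matrix.smul_mul, Matrix.one_mul, Matrix.smul_mul, hxJ,
    kelvinJacobian]
  field_simp
  module

theorem contDiffAt_kelvinMap {n : WithTop ℕ∞} (hx : quadForm M x ≠ 0) :
    ContDiffAt ℝ n (kelvinMap M) x :=
  (contDiff_quadForm.contDiffAt.inv hx).smul (toEuclideanCLM (𝕜 := ℝ) M).contDiff.contDiffAt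

theorem kelvinMap_ne_zero (hx : quadForm M x ≠ 0) : kelvinMap M x ≠ 0 :=
  smul_ne_zero (inv_ne_zero hx) fun h => hx (by simp [quadForm, h])

theorem weightedTrace_inv_hessian_comp_kelvinMap (hM : M.IsHermitian) (hdet : IsUnit M)
    (hx : quadForm M x ≠ 0) (ℓ : EuclideanSpace ℝ ι →L[ℝ] ℝ) :
    weightedTrace M⁻¹ (fderiv ℝ (fderiv ℝ (ℓ ∘ kelvinMap M)) x) =
      (4 - 2 * Fintype.card ι) / quadForm M x ^ 2 * ℓ (toEuclideanCLM (𝕜 := ℝ) M x) := by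
  have hfun : ⇑ℓ ∘ kelvinMap M =
      fun y => quadForm M y ^ (-1 : ℝ) * (ℓ.comp (toEuclideanCLM (𝕜 := ℝ) M)) y := by
    funext y
    simp [kelvinMap, Real.rpow_neg_one]
  rw [hfun, fderiv_fderiv_mul (contDiff_quadForm.contDiffAt.rpow_const_of_ne hx)
    (ContinuousLinearMap.contDiff _).contDiffAt, ContinuousLinearMap.fderiv,
    ContinuousLinearMap.fderiv_fderiv,
    ((hasFDerivAt_quadForm hM x).rpow_const (Or.inl hx)).fderiv, smul_zero, add_zero,
    weightedTrace_add, weightedTrace_add, weightedTrace_smul,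
    weightedTrace_inv_hessian_quadForm_rpow hM hdet hx]
  simp only [smul_smulRight, smulRight_smul, weightedTrace_smul,
    weightedTrace_inv_innerSL_smulRight hM hdet, weightedTrace_inv_smulRight_innerSL hdet]
  rw [show (-1 - 1 : ℝ) = ((-2 : ℤ) : ℝ) by norm_num, Real.rpow_intCast]
  simp only [ContinuousLinearMap.coe_comp, Function.comp_apply]
  field_simp
  ring

theorem contDiffAt_kelvinTransform {u : EuclideanSpace ℝ ι → ℝ} (hx : quadForm M x ≠ 0)
    (hu : ContDiffAt ℝ 2 u (kelvinMap M x)) : ContDiffAt ℝ 2 (kelvinTransform M u) x :=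
  (hu.comp x (contDiffAt_kelvinMap hx)).mul (contDiff_quadForm.contDiffAt.rpow_const_of_ne hx)

theorem weightedTrace_inv_hessian_kelvinTransform {u : EuclideanSpace ℝ ι → ℝ}
    (hM : M.IsHermitian) (hdet : IsUnit M) (hx : quadForm M x ≠ 0)
    (hu : ContDiffAt ℝ 2 u (kelvinMap M x)) :
    weightedTrace M⁻¹ (fderiv ℝ (fderiv ℝ (kelvinTransform M u)) x) =
      quadForm M x ^ (-(((Fintype.card ι : ℝ) + 2) / 2)) *
        weightedTrace M (fderiv ℝ (fderiv ℝ u) (kelvinMap M x)) := by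
  set c : ℝ := -(((Fintype.card ι : ℝ) - 2) / 2) with hc
  have hT := hasFDerivAt_kelvinMap hM hx
  have hDv : fderiv ℝ (u ∘ kelvinMap M) x x =
      -(quadForm M x)⁻¹ * fderiv ℝ u (kelvinMap M x) (toEuclideanCLM (𝕜 := ℝ) M x) := by
    rw [((hu.differentiableAt two_ne_zero).hasFDerivAt.comp x hT).fderiv, coe_comp,
      Function.comp_apply, kelvinJacobian_apply_self hx, map_smul, smul_eq_mul]
  rw [show kelvinTransform M u = fun y => (u ∘ kelvinMap M) y * quadForm M y ^ c from rfl,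
    fderiv_fderiv_mul (hu.comp x (contDiffAt_kelvinMap hx))
      (contDiff_quadForm.contDiffAt.rpow_const_of_ne hx),
    fderiv_fderiv_comp hu (contDiffAt_kelvinMap hx), hT.fderiv,
    ((hasFDerivAt_quadForm hM x).rpow_const (Or.inl hx)).fderiv]
  simp only [weightedTrace_add, weightedTrace_smul, weightedTrace_bilinearComp,
    kelvinJacobian_mul_inv_mul_transpose hM hdet, weightedTrace_smul_left,
    weightedTrace_inv_hessian_comp_kelvinMap hM hdet hx,
    weightedTrace_inv_hessian_quadForm_rpow hM hdet hx, smul_smulRight, smulRight_smul,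
    weightedTrace_inv_innerSL_smulRight hM hdet, weightedTrace_inv_smulRight_innerSL hdet, hDv]
  rw [show -(((Fintype.card ι : ℝ) + 2) / 2) = c - (2 : ℕ) by rw [hc]; push_cast; ring,
    Real.rpow_sub_natCast hx, Real.rpow_sub_one hx]
  field_simp
  rw [hc]
  ring

end Kelvin

theorem stmt_12_general {n : ℕ}
    (M : Matrix (Fin n) (Fin n) ℝ) (hM : M.PosDef)
    (u : EuclideanSpace ℝ (Fin n) → ℝ)
    (hu : ContDiffOn ℝ 2 u ({0}ᶜ : Set (EuclideanSpace ℝ (Fin n))))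
    (q : EuclideanSpace ℝ (Fin n) → ℝ)
    (hq : q = fun x => ⟪Matrix.toEuclideanLin M x, x⟫)
    (TH : EuclideanSpace ℝ (Fin n) → EuclideanSpace ℝ (Fin n))
    (hTH : TH = fun x => (q x)⁻¹ • Matrix.toEuclideanLin M x)
    (uhat : EuclideanSpace ℝ (Fin n) → ℝ)
    (huhat : uhat = fun x => u (TH x) * q x ^ (-(((n : ℝ) - 2) / 2))) :
    ContDiffOn ℝ 2 uhat ({0}ᶜ : Set (EuclideanSpace ℝ (Fin n)))
      ∧ ∀ x : EuclideanSpace ℝ (Fin n), x ≠ 0 →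
          ∑ i : Fin n, ∑ j : Fin n,
              M⁻¹ i j * fderiv ℝ (fderiv ℝ uhat) x
                (EuclideanSpace.single i 1) (EuclideanSpace.single j 1)
            = (∑ i : Fin n, ∑ j : Fin n,
                M i j * fderiv ℝ (fderiv ℝ u) (TH x)
                  (EuclideanSpace.single i 1) (EuclideanSpace.single j 1))
                / q x ^ (((n : ℝ) + 2) / 2) := by
  have hq' : q = quadForm M := hq
  have hTH' : TH = kelvinMap M := by rw [hTH, hq']; rfl
  have huhat' : uhat = kelvinTransform M u := by
    rw [huhat, hTH', hq']
    funext x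
    rw [kelvinTransform, Fintype.card_fin]
  subst hq' hTH' huhat'
  have hq0 {x : EuclideanSpace ℝ (Fin n)} (hx : x ≠ 0) : quadForm M x ≠ 0 :=
    (quadForm_pos hM hx).ne'
  have huT {x : EuclideanSpace ℝ (Fin n)} (hx : x ≠ 0) : ContDiffAt ℝ 2 u (kelvinMap M x) :=
    hu.contDiffAt (isOpen_compl_singleton.mem_nhds (kelvinMap_ne_zero (hq0 hx)))
  refine ⟨fun x hx => (contDiffAt_kelvinTransform (hq0 hx) (huT hx)).contDiffWithinAt,
    fun x hx => ?_⟩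
  have h := weightedTrace_inv_hessian_kelvinTransform hM.isHermitian hM.isUnit (hq0 hx) (huT hx)
  rw [Fintype.card_fin, Real.rpow_neg (quadForm_pos hM hx).le] at h
  rw [div_eq_inv_mul]
  exact h

/-- Theorem 1.2, case p = 2, pointwise version: Let `u` be `C²` on
`ℝⁿ \ {0}`. With `q(x) = ⟨Mx, x⟩ = H(x)²`, `T_H(x) = Mx/q(x)` and the anisotropic Kelvin
transform `û(x) = u(T_H(x)) q(x)^{-(n-2)/2}`, the function `û` is `C²` on `ℝⁿ \ {0}` and
for every `x ≠ 0`: `tr(M⁻¹ Hess û(x)) = tr(M Hess u(T_H(x))) / q(x)^{(n+2)/2}`, i.e.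
`Δ^{H*} û = ((Δ^H u) ∘ T_H)/H^{n+2}` on `ℝⁿ \ {0}`. Hessian entries are second Fréchet
derivatives in the coordinate directions; powers are `Real.rpow`. -/
theorem stmt_12 {n : ℕ} (hn : 2 ≤ n)
    (M : Matrix (Fin n) (Fin n) ℝ) (hM : M.PosDef)
    (u : EuclideanSpace ℝ (Fin n) → ℝ)
    (hu : ContDiffOn ℝ 2 u ({0}ᶜ : Set (EuclideanSpace ℝ (Fin n))))
    (q : EuclideanSpace ℝ (Fin n) → ℝ)
    (hq : q = fun x => ⟪Matrix.toEuclideanLin M x, x⟫)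
    (TH : EuclideanSpace ℝ (Fin n) → EuclideanSpace ℝ (Fin n))
    (hTH : TH = fun x => (q x)⁻¹ • Matrix.toEuclideanLin M x)
    (uhat : EuclideanSpace ℝ (Fin n) → ℝ)
    (huhat : uhat = fun x => u (TH x) * q x ^ (-(((n : ℝ) - 2) / 2))) :
    ContDiffOn ℝ 2 uhat ({0}ᶜ : Set (EuclideanSpace ℝ (Fin n)))
      ∧ ∀ x : EuclideanSpace ℝ (Fin n), x ≠ 0 →
          ∑ i : Fin n, ∑ j : Fin n,
              M⁻¹ i j * fderiv ℝ (fderiv ℝ uhat) x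
                (EuclideanSpace.single i 1) (EuclideanSpace.single j 1)
            = (∑ i : Fin n, ∑ j : Fin n,
                M i j * fderiv ℝ (fderiv ℝ u) (TH x)
                  (EuclideanSpace.single i 1) (EuclideanSpace.single j 1))
                / q x ^ (((n : ℝ) + 2) / 2) :=
  stmt_12_general M hM u hu q hq TH hTH uhat huhat
end

section
/- (Theorem 1.2, case p = n, pointwise version.) Let n ≥ 2 and let u : ℝⁿ \ {0} → ℝ be twice continuously differentiable. Write q(x) = ⟨Mx, x⟩ = H(x)², T_H(x) = Mx/q(x), and set u*(x) = u(T_H(x)). Let x ≠ 0 and assume ∇u(T_H(x)) ≠ 0 (this hypothesis may be dropped when n = 2). Then div(⟨M⁻¹∇u*, ∇u*⟩^{(n-2)/2} M⁻¹∇u*)(x) = [div(⟨M∇u, ∇u⟩^{(n-2)/2} M∇u)](T_H(x)) / q(x)^{n}; that is, Δ_n^{H*} u* = ((Δ_n^H u) ∘ T_H)/H^{2n} pointwise where defined. -/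
/-!
The map `T z = q(z)⁻¹ • M z`, with `q(z) = ⟪M z, z⟫`, has the symmetric derivative
`DT = q⁻¹ • M ∘ R`, where `R = 1 - 2 q⁻¹ • z ⊗ M z` is an `M`-orthogonal reflection. Hence
`∇(u ∘ T) = DT (∇u ∘ T)` and `⟪M⁻¹ ∇u*, ∇u*⟫ = q⁻² ⟪M ∇u, ∇u⟫ ∘ T`, so the `H*`-flux of `u*`
equals `q^{1-n} • R (M⁻¹ (F ∘ T))`, `F` being the `H`-flux of `u`. Since `det DT = -q⁻ⁿ det M`,
this is `-(det M)⁻¹` times the Piola transform `cof(DT)ᵀ (F ∘ T)`, whose divergence is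
`det DT • (div F ∘ T)` — which is the claim. We verify this last identity by computing the trace of
the derivative directly; it needs `F` to be differentiable at `T x` only.
-/

open scoped RealInnerProductSpace

lemma ContDiffAt.differentiableAt_gradient {E : Type*} [NormedAddCommGroup E]
    [InnerProductSpace ℝ E] [CompleteSpace E] {u : E → ℝ} {y : E} (hu : ContDiffAt ℝ 2 u y) :
    DifferentiableAt ℝ (gradient u) y :=
  (InnerProductSpace.toDual ℝ E).symm.differentiableAt.comp y
    ((hu.fderiv_right (m := 1) le_rfl).differentiableAt one_ne_zero)

lemma EuclideanSpace.sum_apply_single_eq_trace {ι : Type*} [Fintype ι] [DecidableEq ι]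
    (L : EuclideanSpace ℝ ι →L[ℝ] EuclideanSpace ℝ ι) :
    ∑ i, L (EuclideanSpace.single i 1) i
      = LinearMap.trace ℝ _ (L : EuclideanSpace ℝ ι →ₗ[ℝ] EuclideanSpace ℝ ι) := by
  rw [LinearMap.trace_eq_sum_inner _ (EuclideanSpace.basisFun ι ℝ)]
  simp [EuclideanSpace.inner_single_left]

namespace Matrix

variable {ι : Type*} [Fintype ι] [DecidableEq ι] {M : Matrix ι ι ℝ}

lemma PosDef.inner_toEuclideanCLM_pos (hM : M.PosDef) {v : EuclideanSpace ℝ ι} (hv : v ≠ 0) :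
    0 < ⟪toEuclideanCLM (𝕜 := ℝ) M v, v⟫ := by
  rw [real_inner_comm, inner_toEuclideanCLM]
  simpa using hM.dotProduct_mulVec_pos (x := WithLp.ofLp v) (by simpa using hv)

lemma leftInverse_toEuclideanCLM_inv (hM : IsUnit M.det) :
    Function.LeftInverse (toEuclideanCLM (𝕜 := ℝ) M⁻¹) (toEuclideanCLM (𝕜 := ℝ) M) :=
  DFunLike.congr_fun (show toEuclideanCLM (𝕜 := ℝ) M⁻¹ * toEuclideanCLM (𝕜 := ℝ) M = 1 by
    rw [← map_mul, nonsing_inv_mul _ hM, map_one])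

lemma rightInverse_toEuclideanCLM_inv (hM : IsUnit M.det) :
    Function.RightInverse (toEuclideanCLM (𝕜 := ℝ) M⁻¹) (toEuclideanCLM (𝕜 := ℝ) M) :=
  DFunLike.congr_fun (show toEuclideanCLM (𝕜 := ℝ) M * toEuclideanCLM (𝕜 := ℝ) M⁻¹ = 1 by
    rw [← map_mul, mul_nonsing_inv _ hM, map_one])

end Matrix

namespace Kelvin

variable {E : Type*} [NormedAddCommGroup E] [InnerProductSpace ℝ E]

noncomputable def kelvin (A : E →L[ℝ] E) (z : E) : E := ⟪A z, z⟫⁻¹ • A z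

noncomputable def kelvinDeriv (A : E →L[ℝ] E) (z : E) : E →L[ℝ] E :=
  ⟪A z, z⟫⁻¹ • A - (2 * (⟪A z, z⟫ ^ 2)⁻¹) • (innerSL ℝ (A z)).smulRight (A z)

lemma kelvinDeriv_apply (A : E →L[ℝ] E) (z v : E) :
    kelvinDeriv A z v = ⟪A z, z⟫⁻¹ • A v - (2 * (⟪A z, z⟫ ^ 2)⁻¹ * ⟪A z, v⟫) • A z := by
  simp [kelvinDeriv, mul_smul]

lemma kelvinDeriv_apply_self (A : E →L[ℝ] E) {z : E} (hz : ⟪A z, z⟫ ≠ 0) :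
    kelvinDeriv A z z = -⟪A z, z⟫⁻¹ • A z := by
  rw [kelvinDeriv_apply]
  match_scalars
  field_simp
  ring

/-- With `A = M` and `p = (n - 2) / 2`, `finslerFlux A p ∇u` is the flux `H^{n-1}(∇u) H_ξ(∇u)` of
the Finsler `n`-Laplacian. -/
noncomputable def finslerFlux (A : E →L[ℝ] E) (p : ℝ) (v : E) : E := ⟪A v, v⟫ ^ p • A v

/-- For `B = A⁻¹` and `m + 1 = dim E` this is, up to the factor `-det A`, the Piola transform
`cof (D kelvin)ᵀ (F ∘ kelvin)` of `F` along `kelvin A`, whose divergence is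
`det (D kelvin) • (div F ∘ kelvin)`. -/
noncomputable def kelvinPiola (A B : E →L[ℝ] E) (m : ℕ) (F : E → E) (z : E) : E :=
  ⟪A z, z⟫⁻¹ ^ m • (B (F (kelvin A z)) - (2 * ⟪z, F (kelvin A z)⟫ * ⟪A z, z⟫⁻¹) • z)

variable {A : E →L[ℝ] E}

lemma inner_kelvin_self {z : E} (hz : ⟪A z, z⟫ ≠ 0) : ⟪kelvin A z, z⟫ = 1 := by
  rw [kelvin, real_inner_smul_left, inv_mul_cancel₀ hz]

lemma kelvin_ne_zero {z : E} (hz : ⟪A z, z⟫ ≠ 0) : kelvin A z ≠ 0 := by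
  intro h
  simpa [h] using inner_kelvin_self hz

lemma hasFDerivAt_inner_apply_self (hA : (A : E →ₗ[ℝ] E).IsSymmetric) (z : E) :
    HasFDerivAt (fun w => ⟪A w, w⟫) ((2 : ℝ) • innerSL ℝ (A z)) z := by
  refine (A.hasFDerivAt.inner ℝ (hasFDerivAt_id z)).congr_fderiv ?_
  ext v
  have := hA v z
  simp only [ContinuousLinearMap.coe_coe] at this
  simp [fderivInnerCLM_apply, this, real_inner_comm, two_mul]

lemma hasFDerivAt_kelvin (hA : (A : E →ₗ[ℝ] E).IsSymmetric) {z : E} (hz : ⟪A z, z⟫ ≠ 0) :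
    HasFDerivAt (kelvin A) (kelvinDeriv A z) z := by
  have hinv := (hasDerivAt_inv hz).comp_hasFDerivAt (f := fun w => ⟪A w, w⟫) z
    (hasFDerivAt_inner_apply_self hA z)
  refine (hinv.smul A.hasFDerivAt).congr_fderiv ?_
  ext1 v
  simp only [kelvinDeriv_apply, Function.comp_apply, add_apply,
    smul_apply, ContinuousLinearMap.smulRight_apply, coe_innerSL_apply,
    smul_eq_mul]
  module

lemma inner_kelvinDeriv_left (hA : (A : E →ₗ[ℝ] E).IsSymmetric) (z v w : E) :
    ⟪kelvinDeriv A z v, w⟫ = ⟪v, kelvinDeriv A z w⟫ := by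
  have := hA v w
  simp only [ContinuousLinearMap.coe_coe] at this
  simp only [kelvinDeriv_apply, inner_sub_left, inner_sub_right, real_inner_smul_left,
    real_inner_smul_right, this, real_inner_comm (A z) v]
  ring

lemma hasGradientAt_comp_kelvin [CompleteSpace E] (hA : (A : E →ₗ[ℝ] E).IsSymmetric) {z : E}
    (hz : ⟪A z, z⟫ ≠ 0) {u : E → ℝ} {g : E} (hu : HasGradientAt u g (kelvin A z)) :
    HasGradientAt (fun w => u (kelvin A w)) (kelvinDeriv A z g) z := by
  rw [hasGradientAt_iff_hasFDerivAt]
  refine (hu.hasFDerivAt.comp z (hasFDerivAt_kelvin hA hz)).congr_fderiv ?_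
  ext1 v
  simp [InnerProductSpace.toDual_apply_apply, inner_kelvinDeriv_left hA]

lemma differentiableAt_finslerFlux_comp {G : E → E} {y : E} (hG : DifferentiableAt ℝ G y) {p : ℝ}
    (hGp : ⟪A (G y), G y⟫ ≠ 0 ∨ p = 0) :
    DifferentiableAt ℝ (fun w => finslerFlux A p (G w)) y := by
  rcases hGp with hGy | rfl
  · exact (((A.differentiableAt.comp y hG).inner ℝ hG).rpow_const (.inl hGy)).smul
      (A.differentiableAt.comp y hG)
  · simp only [finslerFlux, Real.rpow_zero, one_smul]
    exact A.differentiableAt.comp y hG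

variable {B : E →L[ℝ] E}

lemma apply_kelvinDeriv_of_leftInverse (hBA : Function.LeftInverse B A) (z v : E) :
    B (kelvinDeriv A z v) = ⟪A z, z⟫⁻¹ • v - (2 * (⟪A z, z⟫ ^ 2)⁻¹ * ⟪A z, v⟫) • z := by
  simp only [kelvinDeriv_apply, map_sub, map_smul, hBA _]

lemma inner_apply_kelvinDeriv_of_leftInverse (hA : (A : E →ₗ[ℝ] E).IsSymmetric)
    (hBA : Function.LeftInverse B A) {z : E} (hz : ⟪A z, z⟫ ≠ 0) (v : E) :
    ⟪B (kelvinDeriv A z v), kelvinDeriv A z v⟫ = (⟪A z, z⟫ ^ 2)⁻¹ * ⟪A v, v⟫ := by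
  have hzAv : ⟪z, A v⟫ = ⟪A z, v⟫ := (hA z v).symm
  rw [apply_kelvinDeriv_of_leftInverse hBA, kelvinDeriv_apply]
  simp only [inner_sub_left, inner_sub_right, real_inner_smul_left, real_inner_smul_right,
    real_inner_comm (A z) z, real_inner_comm (A z) v, hzAv, real_inner_comm (A v) v]
  field_simp
  ring

lemma inner_apply_apply_of_rightInverse (hA : (A : E →ₗ[ℝ] E).IsSymmetric)
    (hAB : Function.RightInverse B A) (z v : E) : ⟪A z, B v⟫ = ⟪z, v⟫ := by
  have := hA z (B v)
  simp only [ContinuousLinearMap.coe_coe] at this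
  rw [this, hAB]

lemma finslerFlux_kelvinDeriv (hA : (A : E →ₗ[ℝ] E).IsSymmetric)
    (hBA : Function.LeftInverse B A) {z : E} (hz : 0 < ⟪A z, z⟫) {v : E} (hv : 0 ≤ ⟪A v, v⟫)
    {p : ℝ} {m : ℕ} (hpm : 2 * p + 1 = m) :
    finslerFlux B p (kelvinDeriv A z v)
      = ⟪A z, z⟫⁻¹ ^ m • (B (finslerFlux A p v)
          - (2 * ⟪z, finslerFlux A p v⟫ * ⟪A z, z⟫⁻¹) • z) := by
  have hscale : ((⟪A z, z⟫ ^ 2)⁻¹ * ⟪A v, v⟫) ^ p * ⟪A z, z⟫⁻¹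
      = ⟪A z, z⟫⁻¹ ^ m * ⟪A v, v⟫ ^ p := by
    have hr : 0 < ⟪A z, z⟫⁻¹ := inv_pos.mpr hz
    rw [Real.mul_rpow (by positivity) hv, ← inv_pow, ← Real.rpow_natCast _ 2,
      ← Real.rpow_mul hr.le, mul_right_comm, ← Real.rpow_add_one hr.ne', ← Real.rpow_natCast,
      ← hpm]
    push_cast
    ring_nf
  have hzAv : ⟪z, A v⟫ = ⟪A z, v⟫ := (hA z v).symm
  rw [finslerFlux, inner_apply_kelvinDeriv_of_leftInverse hA hBA hz.ne',
    apply_kelvinDeriv_of_leftInverse hBA, finslerFlux, map_smul, hBA v, real_inner_smul_right,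
    hzAv]
  match_scalars
  · linear_combination hscale
  · linear_combination (-2 * ⟪A z, v⟫ * ⟪A z, z⟫⁻¹) * hscale

lemma finslerFlux_gradient_comp_kelvin [CompleteSpace E] (hA : (A : E →ₗ[ℝ] E).IsSymmetric)
    (hBA : Function.LeftInverse B A) (hA_nonneg : ∀ v, 0 ≤ ⟪A v, v⟫) {z : E} (hz : 0 < ⟪A z, z⟫)
    {u : E → ℝ} (hu : DifferentiableAt ℝ u (kelvin A z)) {p : ℝ} {m : ℕ} (hpm : 2 * p + 1 = m) :
    finslerFlux B p (gradient (fun w => u (kelvin A w)) z)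
      = kelvinPiola A B m (fun y => finslerFlux A p (gradient u y)) z := by
  rw [(hasGradientAt_comp_kelvin hA hz.ne' hu.hasGradientAt).gradient,
    finslerFlux_kelvinDeriv hA hBA hz (hA_nonneg _) hpm]
  rfl

variable [FiniteDimensional ℝ E]

lemma trace_comp_kelvinDeriv (hA : (A : E →ₗ[ℝ] E).IsSymmetric) (hAB : Function.RightInverse B A)
    (D : E →L[ℝ] E) (z : E) :
    LinearMap.trace ℝ E ((B : E →ₗ[ℝ] E) ∘ₗ (D : E →ₗ[ℝ] E) ∘ₗ (kelvinDeriv A z : E →ₗ[ℝ] E))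
      = ⟪A z, z⟫⁻¹ * LinearMap.trace ℝ E D - 2 * (⟪A z, z⟫ ^ 2)⁻¹ * ⟪z, D (A z)⟫ := by
  have hAB' : (A : E →ₗ[ℝ] E) ∘ₗ (B : E →ₗ[ℝ] E) = LinearMap.id := LinearMap.ext hAB
  have hcyc : LinearMap.trace ℝ E ((B : E →ₗ[ℝ] E) ∘ₗ (D : E →ₗ[ℝ] E) ∘ₗ (A : E →ₗ[ℝ] E))
      = LinearMap.trace ℝ E D := by
    rw [← LinearMap.comp_assoc, LinearMap.trace_comp_comm', ← LinearMap.comp_assoc, hAB',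
      LinearMap.id_comp]
  have hrank : (B : E →ₗ[ℝ] E) ∘ₗ (D : E →ₗ[ℝ] E) ∘ₗ (innerₛₗ ℝ (A z)).smulRight (A z)
      = (innerₛₗ ℝ (A z)).smulRight (B (D (A z))) :=
    LinearMap.ext fun w => by simp
  simp only [kelvinDeriv, ContinuousLinearMap.toLinearMap_sub, ContinuousLinearMap.toLinearMap_smul,
    ContinuousLinearMap.coe_smulRight, ContinuousLinearMap.toLinearMap_innerSL_apply,
    LinearMap.comp_sub, LinearMap.comp_smul, hrank, map_sub, map_smul, hcyc, smul_eq_mul,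
    LinearMap.trace_smulRight, innerₛₗ_apply_apply, inner_apply_apply_of_rightInverse hA hAB]

theorem trace_fderiv_kelvinPiola (hA : (A : E →ₗ[ℝ] E).IsSymmetric)
    (hAB : Function.RightInverse B A) {m : ℕ} (hm : Module.finrank ℝ E = m + 1) {x : E}
    (hx : ⟪A x, x⟫ ≠ 0) {F : E → E} {DF : E →L[ℝ] E} (hF : HasFDerivAt F DF (kelvin A x)) :
    LinearMap.trace ℝ E (fderiv ℝ (kelvinPiola A B m F) x)
      = LinearMap.trace ℝ E DF / ⟪A x, x⟫ ^ (m + 1) := by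
  have hq := hasFDerivAt_inner_apply_self hA x
  have hr := (hasDerivAt_inv hx).comp_hasFDerivAt (f := fun w => ⟪A w, w⟫) x hq
  have hG := hF.comp x (hasFDerivAt_kelvin hA hx)
  have hP := (hasFDerivAt_id x).inner ℝ hG
  have hβ := (hP.const_mul 2).mul hr
  have hW := (B.hasFDerivAt.comp x hG).sub (hβ.smul (hasFDerivAt_id x))
  have hΦ : HasFDerivAt (kelvinPiola A B m F) _ x := (hr.pow m).smul hW
  rw [hΦ.fderiv]
  simp only [Function.comp_apply, inv_pow, id_eq, Pi.mul_apply, neg_smul, smul_neg,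
    nsmul_eq_mul, ContinuousLinearMap.toLinearMap_add, ContinuousLinearMap.toLinearMap_smul,
    ContinuousLinearMap.toLinearMap_sub, ContinuousLinearMap.toLinearMap_comp,
    ContinuousLinearMap.coe_id, ContinuousLinearMap.coe_smulRight,
    ContinuousLinearMap.toLinearMap_neg, ContinuousLinearMap.toLinearMap_innerSL_apply,
    ContinuousLinearMap.coe_prod, ContinuousLinearMap.coe_coe, map_add, map_smul, map_sub, map_neg,
    trace_comp_kelvinDeriv hA hAB, LinearMap.trace_id, LinearMap.trace_smulRight,
    LinearMap.add_apply, LinearMap.neg_apply, LinearMap.smul_apply, LinearMap.coe_comp,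
    LinearMap.prod_apply, LinearMap.id_coe, Function.prod_apply, smul_eq_mul, innerₛₗ_apply_apply,
    kelvinDeriv_apply_self A hx, fderivInnerCLM_apply, inner_neg_right, real_inner_smul_right,
    inner_apply_apply_of_rightInverse hA hAB, hm]
  -- the power rule has left `m * r ^ (m - 1)`, with truncated subtraction
  rcases m with _ | m
  · field_simp
    ring
  · simp only [Nat.add_sub_cancel]
    push_cast
    field_simp
    ring

theorem trace_fderiv_finslerFlux_gradient_comp_kelvin (hA : (A : E →ₗ[ℝ] E).IsSymmetric)
    (hBA : Function.LeftInverse B A) (hAB : Function.RightInverse B A)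
    (hA_pos : ∀ v ≠ 0, 0 < ⟪A v, v⟫) {m : ℕ} (hm : Module.finrank ℝ E = m + 1) {p : ℝ}
    (hpm : 2 * p + 1 = m) {u : E → ℝ} (hu : ContDiffOn ℝ 2 u {0}ᶜ) {x : E} (hx : x ≠ 0)
    (hgrad : gradient u (kelvin A x) ≠ 0 ∨ p = 0) :
    LinearMap.trace ℝ E
        (fderiv ℝ (fun y => finslerFlux B p (gradient (fun w => u (kelvin A w)) y)) x)
      = LinearMap.trace ℝ E (fderiv ℝ (fun y => finslerFlux A p (gradient u y)) (kelvin A x))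
          / ⟪A x, x⟫ ^ (m + 1) := by
  have hA_nonneg : ∀ v, 0 ≤ ⟪A v, v⟫ := fun v => by
    rcases eq_or_ne v 0 with rfl | hv
    · simp
    · exact (hA_pos v hv).le
  have hu_at : ∀ z ≠ 0, ContDiffAt ℝ 2 u (kelvin A z) := fun z hz =>
    hu.contDiffAt (isOpen_compl_singleton.mem_nhds (kelvin_ne_zero (hA_pos z hz).ne'))
  have hflux : DifferentiableAt ℝ (fun y => finslerFlux A p (gradient u y)) (kelvin A x) :=
    differentiableAt_finslerFlux_comp (hu_at x hx).differentiableAt_gradient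
      (hgrad.imp_left fun hg => (hA_pos _ hg).ne')
  have hfield : (fun y => finslerFlux B p (gradient (fun w => u (kelvin A w)) y))
      =ᶠ[nhds x] kelvinPiola A B m (fun y => finslerFlux A p (gradient u y)) := by
    filter_upwards [isOpen_compl_singleton.mem_nhds hx] with z hz
    exact finslerFlux_gradient_comp_kelvin hA hBA hA_nonneg (hA_pos z hz)
      ((hu_at z hz).differentiableAt two_ne_zero) hpm
  rw [hfield.fderiv_eq]
  exact trace_fderiv_kelvinPiola hA hAB hm (hA_pos x hx).ne' hflux.hasFDerivAt

end Kelvin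

open Kelvin in
theorem stmt_13_general {n : ℕ}
    (M : Matrix (Fin n) (Fin n) ℝ) (hM : M.PosDef)
    (u : EuclideanSpace ℝ (Fin n) → ℝ)
    (hu : ContDiffOn ℝ 2 u ({0}ᶜ : Set (EuclideanSpace ℝ (Fin n))))
    (q : EuclideanSpace ℝ (Fin n) → ℝ)
    (hq : q = fun x => ⟪Matrix.toEuclideanLin M x, x⟫)
    (TH : EuclideanSpace ℝ (Fin n) → EuclideanSpace ℝ (Fin n))
    (hTH : TH = fun x => (q x)⁻¹ • Matrix.toEuclideanLin M x)
    (ustar : EuclideanSpace ℝ (Fin n) → ℝ) (hustar : ustar = fun x => u (TH x))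
    (x : EuclideanSpace ℝ (Fin n)) (hx : x ≠ 0)
    (hgrad : gradient u (TH x) ≠ 0 ∨ n = 2) :
    ∑ i : Fin n,
        fderiv ℝ (fun y =>
            ⟪Matrix.toEuclideanLin M⁻¹ (gradient ustar y), gradient ustar y⟫ ^ (((n : ℝ) - 2) / 2)
              • Matrix.toEuclideanLin M⁻¹ (gradient ustar y)) x
          (EuclideanSpace.single i 1) i
      = (∑ i : Fin n,
          fderiv ℝ (fun y =>
              ⟪Matrix.toEuclideanLin M (gradient u y), gradient u y⟫ ^ (((n : ℝ) - 2) / 2)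
                • Matrix.toEuclideanLin M (gradient u y)) (TH x)
            (EuclideanSpace.single i 1) i) / q x ^ n := by
  subst hustar hTH hq
  obtain ⟨m, rfl⟩ : ∃ m, n = m + 1 := Nat.exists_eq_add_one.mpr <| Nat.pos_of_ne_zero <| by
    rintro rfl
    exact hx (Subsingleton.elim _ _)
  set A := Matrix.toEuclideanCLM (𝕜 := ℝ) M
  set B := Matrix.toEuclideanCLM (𝕜 := ℝ) M⁻¹
  set p : ℝ := (((m + 1 : ℕ) : ℝ) - 2) / 2
  change ∑ i, fderiv ℝ (fun y => finslerFlux B p (gradient (fun w => u (kelvin A w)) y)) x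
      (EuclideanSpace.single i 1) i
    = (∑ i, fderiv ℝ (fun y => finslerFlux A p (gradient u y)) (kelvin A x)
      (EuclideanSpace.single i 1) i) / ⟪A x, x⟫ ^ (m + 1)
  rw [EuclideanSpace.sum_apply_single_eq_trace, EuclideanSpace.sum_apply_single_eq_trace]
  have hdet : IsUnit M.det := hM.isUnit.map Matrix.detMonoidHom
  refine trace_fderiv_finslerFlux_gradient_comp_kelvin
    (Matrix.isSymmetric_toEuclideanLin_iff.mpr hM.1) (Matrix.leftInverse_toEuclideanCLM_inv hdet)
    (Matrix.rightInverse_toEuclideanCLM_inv hdet) (fun v hv => hM.inner_toEuclideanCLM_pos hv)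
    finrank_euclideanSpace_fin (by simp only [p]; push_cast; ring) hu hx
    (hgrad.imp_right fun h => ?_)
  simp only [p, h]
  norm_num

/-- Theorem 1.2, case p = n, pointwise version: Let `u` be `C²` on
`ℝⁿ \ {0}`, `q(x) = ⟨Mx, x⟩`, `T_H(x) = Mx/q(x)` and `u*(x) = u(T_H(x))`. Let `x ≠ 0` and
assume `∇u(T_H(x)) ≠ 0` (a hypothesis that may be dropped when `n = 2`). Then
`div(⟨M⁻¹∇u*, ∇u*⟩^{(n-2)/2} M⁻¹∇u*)(x) = [div(⟨M∇u, ∇u⟩^{(n-2)/2} M∇u)](T_H(x)) / q(x)ⁿ`,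
i.e. `Δ_n^{H*} u* = ((Δ_n^H u) ∘ T_H)/H^{2n}` pointwise where defined. The divergence of a
field `F` at `z` is `Σ_i (fderiv ℝ F z (EuclideanSpace.single i 1)) i`; powers are
`Real.rpow`. -/
theorem stmt_13 {n : ℕ} (hn : 2 ≤ n)
    (M : Matrix (Fin n) (Fin n) ℝ) (hM : M.PosDef)
    (u : EuclideanSpace ℝ (Fin n) → ℝ)
    (hu : ContDiffOn ℝ 2 u ({0}ᶜ : Set (EuclideanSpace ℝ (Fin n))))
    (q : EuclideanSpace ℝ (Fin n) → ℝ)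
    (hq : q = fun x => ⟪Matrix.toEuclideanLin M x, x⟫)
    (TH : EuclideanSpace ℝ (Fin n) → EuclideanSpace ℝ (Fin n))
    (hTH : TH = fun x => (q x)⁻¹ • Matrix.toEuclideanLin M x)
    (ustar : EuclideanSpace ℝ (Fin n) → ℝ) (hustar : ustar = fun x => u (TH x))
    (x : EuclideanSpace ℝ (Fin n)) (hx : x ≠ 0)
    (hgrad : gradient u (TH x) ≠ 0 ∨ n = 2) :
    ∑ i : Fin n,
        fderiv ℝ (fun y =>
            ⟪Matrix.toEuclideanLin M⁻¹ (gradient ustar y), gradient ustar y⟫ ^ (((n : ℝ) - 2) / 2)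
              • Matrix.toEuclideanLin M⁻¹ (gradient ustar y)) x
          (EuclideanSpace.single i 1) i
      = (∑ i : Fin n,
          fderiv ℝ (fun y =>
              ⟪Matrix.toEuclideanLin M (gradient u y), gradient u y⟫ ^ (((n : ℝ) - 2) / 2)
                • Matrix.toEuclideanLin M (gradient u y)) (TH x)
            (EuclideanSpace.single i 1) i) / q x ^ n :=
  stmt_13_general M hM u hu q hq TH hTH ustar hustar x hx hgrad
end

section
/- (Proposition C, mean value property over Wulff balls, solid version under (H_M).) Let n ≥ 2, x₀ ∈ ℝⁿ, ρ > 0, and let u be twice continuously differentiable on the Wulff ball B_ρ(x₀) = {x : H*(x − x₀) < ρ} with tr(M · Hess u(x)) = 0 for all x ∈ B_ρ(x₀) (i.e. u is anisotropic harmonic, Δ^H u = 0). Then for every r ∈ (0, ρ), u(x₀) = (1/(κ rⁿ)) ∫_{B_r(x₀)} u(x) dx, where κ is the Lebesgue measure of the unit Wulff ball {x : H*(x) < 1}. -/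
open MeasureTheory
open scoped RealInnerProductSpace

noncomputable section MVP16

variable {n : ℕ}

/-- The quadratic form of `M⁻¹`. -/
def mvq (M : Matrix (Fin n) (Fin n) ℝ) (y : EuclideanSpace ℝ (Fin n)) : ℝ :=
  ⟪Matrix.toEuclideanLin M⁻¹ y, y⟫

lemma mvq_nonneg {M : Matrix (Fin n) (Fin n) ℝ} (hM : M.PosDef) (y : EuclideanSpace ℝ (Fin n)) :
    0 ≤ mvq M y := by
  have h := hM.inv.posSemidef
  have := h.re_dotProduct_nonneg (x := (y : Fin n → ℝ))
  simpa [mvq, Matrix.toEuclideanLin_apply, EuclideanSpace.inner_eq_star_dotProduct,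
    dotProduct, mul_comm] using this

lemma mvq_pos {M : Matrix (Fin n) (Fin n) ℝ} (hM : M.PosDef) {y : EuclideanSpace ℝ (Fin n)}
    (hy : y ≠ 0) : 0 < mvq M y := by
  have h := hM.inv
  have hy' : (y : Fin n → ℝ) ≠ 0 := by
    intro h0
    apply hy
    ext i
    exact congrFun h0 i
  have := h.re_dotProduct_pos hy'
  simpa [mvq, Matrix.toEuclideanLin_apply, EuclideanSpace.inner_eq_star_dotProduct,
    dotProduct, mul_comm] using this

end MVP16

section MVP16b
variable {n : ℕ} {M : Matrix (Fin n) (Fin n) ℝ}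

lemma mvq_contDiff (M : Matrix (Fin n) (Fin n) ℝ) : ContDiff ℝ (⊤ : ℕ∞) (mvq M) := by
  have h1 : ContDiff ℝ (⊤ : ℕ∞) fun y : EuclideanSpace ℝ (Fin n) => Matrix.toEuclideanLin M⁻¹ y :=
    (Matrix.toEuclideanLin M⁻¹).toContinuousLinearMap.contDiff
  exact h1.inner ℝ contDiff_id

lemma mvq_continuous (M : Matrix (Fin n) (Fin n) ℝ) : Continuous (mvq M) :=
  (mvq_contDiff M).continuous

lemma mvq_smul (M : Matrix (Fin n) (Fin n) ℝ) (c : ℝ) (y : EuclideanSpace ℝ (Fin n)) :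
    mvq M (c • y) = c ^ 2 * mvq M y := by
  simp only [mvq, _root_.map_smul, real_inner_smul_left, real_inner_smul_right]
  ring

lemma mvq_symm_aux (hM : M.PosDef) (v y : EuclideanSpace ℝ (Fin n)) :
    ⟪Matrix.toEuclideanLin M⁻¹ v, y⟫ = ⟪Matrix.toEuclideanLin M⁻¹ y, v⟫ := by
  have hsym : (Matrix.toEuclideanLin M⁻¹).IsSymmetric :=
    Matrix.isHermitian_iff_isSymmetric.mp hM.inv.isHermitian
  exact (hsym v y).trans (real_inner_comm _ _)

lemma mvq_hasFDerivAt (hM : M.PosDef) (y : EuclideanSpace ℝ (Fin n)) :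
    HasFDerivAt (mvq M)
      ((2 : ℝ) • (innerSL ℝ (Matrix.toEuclideanLin M⁻¹ y))) y := by
  have h1 : HasFDerivAt (fun y : EuclideanSpace ℝ (Fin n) => Matrix.toEuclideanLin M⁻¹ y)
      (Matrix.toEuclideanLin M⁻¹).toContinuousLinearMap y :=
    (Matrix.toEuclideanLin M⁻¹).toContinuousLinearMap.hasFDerivAt
  have h2 := (h1.inner ℝ (hasFDerivAt_id y))
  refine h2.congr_fderiv ?_
  ext v
  simp only [ContinuousLinearMap.smul_apply, innerSL_apply_apply, fderivInnerCLM_apply,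
    ContinuousLinearMap.coe_comp', Function.comp_apply, ContinuousLinearMap.prod_apply,
    ContinuousLinearMap.coe_id', id_eq, LinearMap.coe_toContinuousLinearMap',
    smul_eq_mul]
  rw [mvq_symm_aux hM v y]
  ring

end MVP16b

section MVP16c
variable {n : ℕ} {M : Matrix (Fin n) (Fin n) ℝ}

lemma mvq_lower_bound (hn : n ≠ 0) (hM : M.PosDef) :
    ∃ c : ℝ, 0 < c ∧ ∀ y : EuclideanSpace ℝ (Fin n), c * ‖y‖ ^ 2 ≤ mvq M y := by
  have hnt : Nontrivial (EuclideanSpace ℝ (Fin n)) := by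
    refine nontrivial_of_ne (EuclideanSpace.single ⟨0, Nat.pos_of_ne_zero hn⟩ 1) 0 ?_
    intro h
    have := congrFun (congrArg (fun x : EuclideanSpace ℝ (Fin n) => (x : Fin n → ℝ)) h)
      ⟨0, Nat.pos_of_ne_zero hn⟩
    simp at this
  obtain ⟨y₀, hy₀S, hy₀min⟩ := (isCompact_sphere (0 : EuclideanSpace ℝ (Fin n)) 1).exists_isMinOn
    (NormedSpace.sphere_nonempty.mpr zero_le_one) (mvq_continuous M).continuousOn
  have hy₀norm : ‖y₀‖ = 1 := by simpa using mem_sphere_iff_norm.mp hy₀S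
  have hy₀ne : y₀ ≠ 0 := by intro h; rw [h] at hy₀norm; simp at hy₀norm
  refine ⟨mvq M y₀, mvq_pos hM hy₀ne, fun y => ?_⟩
  rcases eq_or_ne y 0 with rfl | hy
  · simp [mvq]
  · have hny : (0:ℝ) < ‖y‖ := norm_pos_iff.mpr hy
    have hmem : (‖y‖⁻¹ • y) ∈ Metric.sphere (0 : EuclideanSpace ℝ (Fin n)) 1 := by
      simp [norm_smul, abs_of_pos (inv_pos.mpr hny), inv_mul_cancel₀ hny.ne']
    have hmin : mvq M y₀ ≤ mvq M (‖y‖⁻¹ • y) := hy₀min hmem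
    have h2 : mvq M (‖y‖⁻¹ • y) = ‖y‖⁻¹ ^ 2 * mvq M y := mvq_smul M _ y
    rw [h2] at hmin
    have : mvq M y₀ * ‖y‖ ^ 2 ≤ ‖y‖⁻¹ ^ 2 * mvq M y * ‖y‖ ^ 2 := by
      apply mul_le_mul_of_nonneg_right hmin (by positivity)
    calc mvq M y₀ * ‖y‖ ^ 2 ≤ ‖y‖⁻¹ ^ 2 * mvq M y * ‖y‖ ^ 2 := this
      _ = mvq M y := by field_simp
  
lemma mvq_isCompact_sublevel (hn : n ≠ 0) (hM : M.PosDef) (b : ℝ) :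
    IsCompact {y : EuclideanSpace ℝ (Fin n) | mvq M y ≤ b} := by
  obtain ⟨c, hc, hcb⟩ := mvq_lower_bound hn hM
  have hclosed : IsClosed {y : EuclideanSpace ℝ (Fin n) | mvq M y ≤ b} :=
    isClosed_le (mvq_continuous M) continuous_const
  have hbdd : Bornology.IsBounded {y : EuclideanSpace ℝ (Fin n) | mvq M y ≤ b} := by
    have : {y : EuclideanSpace ℝ (Fin n) | mvq M y ≤ b} ⊆ Metric.closedBall 0 (Real.sqrt (b / c)) := by
      intro y hy
      simp only [Metric.mem_closedBall, dist_zero_right]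
      have h1 : c * ‖y‖ ^ 2 ≤ b := le_trans (hcb y) hy
      have h2 : ‖y‖ ^ 2 ≤ b / c := (le_div_iff₀' hc).mpr h1
      calc ‖y‖ = Real.sqrt (‖y‖ ^ 2) := by rw [Real.sqrt_sq (norm_nonneg y)]
        _ ≤ Real.sqrt (b / c) := Real.sqrt_le_sqrt h2
    exact (Metric.isBounded_closedBall).subset this
  exact Metric.isCompact_of_isClosed_isBounded hclosed hbdd

lemma mvq_coord (hM : M.PosDef) (y : EuclideanSpace ℝ (Fin n)) (i : Fin n) :
    ∑ j : Fin n, M i j * (Matrix.toEuclideanLin M⁻¹ y) j = y i := by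
  have hdet : IsUnit M.det := isUnit_iff_ne_zero.mpr hM.det_pos.ne'
  have h1 : ∀ j, (Matrix.toEuclideanLin M⁻¹ y) j = M⁻¹.mulVec (y : Fin n → ℝ) j := by
    intro j; rfl
  simp_rw [h1]
  have : ∑ j : Fin n, M i j * M⁻¹.mulVec (y : Fin n → ℝ) j
      = (M.mulVec (M⁻¹.mulVec (y : Fin n → ℝ))) i := by
    simp [Matrix.mulVec, dotProduct]
  rw [this, Matrix.mulVec_mulVec, Matrix.mul_nonsing_inv M hdet, Matrix.one_mulVec]

lemma euclidean_sum_single (y : EuclideanSpace ℝ (Fin n)) :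
    ∑ i : Fin n, y i • EuclideanSpace.single i (1:ℝ) = y := by
  ext j
  have h := map_sum (EuclideanSpace.proj j (𝕜 := ℝ))
    (fun i : Fin n => y i • EuclideanSpace.single i (1:ℝ)) Finset.univ
  have h2 : EuclideanSpace.proj j (𝕜 := ℝ) (∑ i : Fin n, y i • EuclideanSpace.single i (1:ℝ))
      = (∑ i : Fin n, y i • EuclideanSpace.single i (1:ℝ)) j := rfl
  rw [← h2, h]
  simp [EuclideanSpace.single_apply]

end MVP16c
open MeasureTheory
open scoped RealInnerProductSpace

-- Lemma A, Pi-space version first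
lemma integral_fderiv_single_pi {m : ℕ} (G : (Fin (m+1) → ℝ) → ℝ) (hG : ContDiff ℝ 1 G)
    (hsupp : HasCompactSupport G) (j : Fin (m+1)) :
    ∫ x : Fin (m+1) → ℝ, fderiv ℝ G x (Pi.single j 1) = 0 := by
  obtain ⟨R, hR0, hRsub⟩ : ∃ R : ℝ, 0 < R ∧ tsupport G ⊆ Metric.ball 0 R := by
    obtain ⟨R, hR⟩ := hsupp.isBounded.subset_ball 0
    exact ⟨max R 1, lt_of_lt_of_le one_pos (le_max_right _ _),
      hR.trans (Metric.ball_subset_ball (le_max_left _ _))⟩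
  have hGzero : ∀ x : Fin (m+1) → ℝ, R ≤ ‖x‖ → G x = 0 := by
    intro x hx
    apply image_eq_zero_of_notMem_tsupport
    intro hmem
    exact absurd (hRsub hmem) (by simp [Metric.mem_ball, not_lt]; simpa using hx)
  have hfd : ∀ x : Fin (m+1) → ℝ, R ≤ ‖x‖ → fderiv ℝ G x = 0 := by
    intro x hx
    have : x ∉ tsupport G := fun hmem =>
      absurd (hRsub hmem) (by simp [Metric.mem_ball, not_lt]; simpa using hx)
    exact image_eq_zero_of_notMem_tsupport (fun h => this (tsupport_fderiv_subset ℝ h))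
  set a : Fin (m+1) → ℝ := fun _ => -R with ha
  set b : Fin (m+1) → ℝ := fun _ => R with hb
  have hle : a ≤ b := fun i => by simp [ha, hb]; linarith
  have key := integral_divergence_of_hasFDerivAt_off_countable' a b hle
    (fun i => if i = j then G else 0)
    (fun i x => if i = j then fderiv ℝ G x else 0) ∅ Set.countable_empty
    (fun i => by
      rcases eq_or_ne i j with rfl | h
      · simp only [if_pos rfl]; exact hG.continuous.continuousOn
      · simp only [if_neg h]; exact continuousOn_const)
    (fun x _ i => by
      rcases eq_or_ne i j with rfl | h
      · simp only [if_pos rfl]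
        exact (hG.differentiable one_ne_zero x).hasFDerivAt
      · simp only [if_neg h]; exact hasFDerivAt_const 0 x)
    (by
      have : (fun x : Fin (m+1) → ℝ =>
          ∑ i : Fin (m+1), (if i = j then fderiv ℝ G x else 0) (Pi.single i 1))
          = fun x => fderiv ℝ G x (Pi.single j 1) := by
        funext x
        rw [Finset.sum_eq_single j]
        · simp
        · intro i _ hij; simp [hij]
        · intro h; exact absurd (Finset.mem_univ j) h
      rw [this]
      exact ((hG.continuous_fderiv one_ne_zero).clm_apply continuous_const).continuousOn.integrableOn_compact
        isCompact_Icc)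
  -- simplify both sides
  have hsum : (fun x : Fin (m+1) → ℝ =>
      ∑ i : Fin (m+1), (if i = j then fderiv ℝ G x else 0) (Pi.single i 1))
      = fun x => fderiv ℝ G x (Pi.single j 1) := by
    funext x
    rw [Finset.sum_eq_single j]
    · simp
    · intro i _ hij; simp [hij]
    · intro h; exact absurd (Finset.mem_univ j) h
  rw [hsum] at key
  have hrhs : ∑ i : Fin (m+1),
      ((∫ x in Set.Icc (a ∘ i.succAbove) (b ∘ i.succAbove),
          (if i = j then G else 0) (i.insertNth (α := fun _ => ℝ) (b i) x)) -
        ∫ x in Set.Icc (a ∘ i.succAbove) (b ∘ i.succAbove),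
          (if i = j then G else 0) (i.insertNth (α := fun _ => ℝ) (a i) x)) = 0 := by
    apply Finset.sum_eq_zero
    intro i _
    rcases eq_or_ne i j with rfl | h
    · simp only [if_pos rfl]
      have h1 : ∀ x : Fin m → ℝ, G (i.insertNth (α := fun _ => ℝ) (b i) x) = 0 := by
        intro x
        apply hGzero
        have : |b i| ≤ ‖i.insertNth (α := fun _ => ℝ) (b i) x‖ := by
          have := norm_le_pi_norm (i.insertNth (α := fun _ => ℝ) (b i) x) i
          simpa using this
        simp only [hb] at this ⊢
        calc R = |R| := (abs_of_pos hR0).symm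
          _ ≤ ‖i.insertNth (α := fun _ => ℝ) R x‖ := this
      have h2 : ∀ x : Fin m → ℝ, G (i.insertNth (α := fun _ => ℝ) (a i) x) = 0 := by
        intro x
        apply hGzero
        have : |a i| ≤ ‖i.insertNth (α := fun _ => ℝ) (a i) x‖ := by
          have := norm_le_pi_norm (i.insertNth (α := fun _ => ℝ) (a i) x) i
          simpa using this
        simp only [ha, abs_neg] at this ⊢
        calc R = |R| := (abs_of_pos hR0).symm
          _ ≤ ‖i.insertNth (α := fun _ => ℝ) (-R) x‖ := this
      simp [h1, h2]
    · simp [if_neg h]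
  rw [hrhs] at key
  rw [← key]
  symm
  apply setIntegral_eq_integral_of_forall_compl_eq_zero
  intro x hx
  have : R ≤ ‖x‖ := by
    simp only [Set.mem_Icc, ha, hb] at hx
    rw [not_and_or] at hx
    have hex : ∃ i, ¬(-R ≤ x i) ∨ ¬(x i ≤ R) := by
      rcases hx with hx | hx
      · obtain ⟨i, hi⟩ := not_forall.mp (fun h => hx (fun i => h i))
        exact ⟨i, Or.inl hi⟩
      · obtain ⟨i, hi⟩ := not_forall.mp (fun h => hx (fun i => h i))
        exact ⟨i, Or.inr hi⟩
    obtain ⟨i, hi⟩ := hex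
    have hxi : R ≤ |x i| := by
      rcases hi with hi | hi
      · rw [abs_of_neg (by linarith [not_le.mp hi])]; linarith [not_le.mp hi]
      · rw [abs_of_pos (by linarith [not_le.mp hi])]; linarith [not_le.mp hi]
    exact hxi.trans (norm_le_pi_norm x i)
  rw [hfd x this]
  rfl

lemma integral_fderiv_single_euc {n : ℕ} (hn : n ≠ 0) (g : EuclideanSpace ℝ (Fin n) → ℝ)
    (hg : ContDiff ℝ 1 g) (hsupp : HasCompactSupport g) (j : Fin n) :
    ∫ y : EuclideanSpace ℝ (Fin n), fderiv ℝ g y (EuclideanSpace.single j 1) = 0 := by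
  obtain ⟨m, rfl⟩ : ∃ m, n = m + 1 := ⟨n - 1, (Nat.succ_pred_eq_of_pos (Nat.pos_of_ne_zero hn)).symm⟩
  set L : (Fin (m+1) → ℝ) ≃L[ℝ] EuclideanSpace ℝ (Fin (m+1)) :=
    (EuclideanSpace.equiv (Fin (m+1)) ℝ).symm with hL
  set G : (Fin (m+1) → ℝ) → ℝ := g ∘ L with hGdef
  have hGc : ContDiff ℝ 1 G := hg.comp L.contDiff
  have hGs : HasCompactSupport G := hsupp.comp_homeomorph L.toHomeomorph
  have key := integral_fderiv_single_pi G hGc hGs j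
  have hfd : ∀ x : Fin (m+1) → ℝ, fderiv ℝ G x (Pi.single j 1)
      = fderiv ℝ g (L x) (EuclideanSpace.single j 1) := by
    intro x
    have h1 : fderiv ℝ G x = (fderiv ℝ g (L x)).comp (L : (Fin (m+1) → ℝ) →L[ℝ] _) := by
      rw [hGdef]
      rw [fderiv_comp x (hg.differentiable one_ne_zero (L x)) L.differentiableAt]
      rw [L.fderiv]
    rw [h1]
    simp only [ContinuousLinearMap.coe_comp', Function.comp_apply]
    congr 1
  rw [← key]
  have hmp := (EuclideanSpace.volume_preserving_symm_measurableEquiv_toLp (Fin (m+1))).symm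
  have hint := hmp.integral_comp
    (MeasurableEquiv.toLp 2 (Fin (m+1) → ℝ)).measurableEmbedding
    (fun y : EuclideanSpace ℝ (Fin (m+1)) => fderiv ℝ g y (EuclideanSpace.single j 1))
  rw [← hint]
  apply integral_congr_ae
  filter_upwards with x
  rw [hfd x]
  rfl

noncomputable def cutf (a b t : ℝ) : ℝ := Real.smoothTransition ((b - t)/(b - a))

noncomputable def cutF (a b t : ℝ) : ℝ :=
  (∫ s in (0:ℝ)..t, cutf a b s)/2 - (∫ s in (0:ℝ)..b, cutf a b s)/2

lemma cutf_continuous (a b : ℝ) : Continuous (cutf a b) :=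
  Real.smoothTransition.continuous.comp (by fun_prop)

lemma cutf_nonneg (a b t : ℝ) : 0 ≤ cutf a b t := Real.smoothTransition.nonneg _

lemma cutf_le_one (a b t : ℝ) : cutf a b t ≤ 1 := Real.smoothTransition.le_one _

lemma cutf_one {a b t : ℝ} (hab : a < b) (ht : t ≤ a) : cutf a b t = 1 := by
  apply Real.smoothTransition.one_of_one_le
  rw [le_div_iff₀ (by linarith)]
  linarith

lemma cutf_zero {a b t : ℝ} (hab : a < b) (ht : b ≤ t) : cutf a b t = 0 := by
  apply Real.smoothTransition.zero_of_nonpos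
  apply div_nonpos_of_nonpos_of_nonneg <;> linarith

lemma cutF_hasDerivAt (a b t : ℝ) : HasDerivAt (cutF a b) (cutf a b t / 2) t := by
  have h1 : HasDerivAt (fun t => ∫ s in (0:ℝ)..t, cutf a b s) (cutf a b t) t := by
    apply intervalIntegral.integral_hasDerivAt_right
    · exact (cutf_continuous a b).intervalIntegrable _ _
    · exact (cutf_continuous a b).stronglyMeasurable.stronglyMeasurableAtFilter
    · exact (cutf_continuous a b).continuousAt
  exact (h1.div_const 2).sub_const ((∫ s in (0:ℝ)..b, cutf a b s)/2)

lemma cutF_contDiff (a b : ℝ) : ContDiff ℝ 1 (cutF a b) := by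
  rw [contDiff_one_iff_deriv]
  constructor
  · exact fun t => (cutF_hasDerivAt a b t).differentiableAt
  · have : deriv (cutF a b) = fun t => cutf a b t / 2 := by
      funext t; exact (cutF_hasDerivAt a b t).deriv
    rw [this]
    exact (cutf_continuous a b).div_const 2

lemma cutF_zero {a b t : ℝ} (hab : a < b) (ht : b ≤ t) : cutF a b t = 0 := by
  have h1 : (∫ s in (0:ℝ)..t, cutf a b s) = (∫ s in (0:ℝ)..b, cutf a b s) + ∫ s in b..t, cutf a b s := by
    rw [intervalIntegral.integral_add_adjacent_intervals] <;>
      exact (cutf_continuous a b).intervalIntegrable _ _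
  have h2 : (∫ s in b..t, cutf a b s) = 0 := by
    rw [intervalIntegral.integral_congr (g := fun _ => (0:ℝ))]
    · simp
    · intro s hs
      rw [Set.uIcc_of_le ht] at hs
      exact cutf_zero hab hs.1
  rw [cutF, h1, h2]
  ring

section KeyIBP
variable {n : ℕ} {M : Matrix (Fin n) (Fin n) ℝ}

lemma key_ibp (hn : n ≠ 0) (hM : M.PosDef) {a b : ℝ} (ha : 0 < a) (hab : a < b)
    {w : EuclideanSpace ℝ (Fin n) → ℝ} {U : Set (EuclideanSpace ℝ (Fin n))}
    (hU : IsOpen U) (hsub : {y : EuclideanSpace ℝ (Fin n) | mvq M y ≤ b} ⊆ U)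
    (hw : ContDiffOn ℝ 2 w U)
    (hharm : ∀ y ∈ U, ∑ i : Fin n, ∑ j : Fin n,
      M i j * fderiv ℝ (fderiv ℝ w) y (EuclideanSpace.single i 1) (EuclideanSpace.single j 1)
        = 0) :
    ∫ y : EuclideanSpace ℝ (Fin n), cutf a b (mvq M y) * fderiv ℝ w y y = 0 := by
  classical
  set Φ : EuclideanSpace ℝ (Fin n) → ℝ := fun y => cutF a b (mvq M y) with hΦdef
  have hq1 : ContDiff ℝ 1 (mvq M) := (mvq_contDiff M).of_le (mod_cast le_top)
  have hΦ : ContDiff ℝ 1 Φ := (cutF_contDiff a b).comp hq1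
  have hΦzero : ∀ y : EuclideanSpace ℝ (Fin n), b ≤ mvq M y → Φ y = 0 := fun y hy => cutF_zero hab hy
  have hMsymm : ∀ i j, M i j = M j i := by
    intro i j
    have := hM.isHermitian.eq
    conv_lhs => rw [← this]
    simp [Matrix.conjTranspose_apply]
  -- derivative of Φ in coordinate directions
  have hΦderiv : ∀ y : EuclideanSpace ℝ (Fin n), HasFDerivAt Φ
      ((cutf a b (mvq M y) / 2) • ((2 : ℝ) • (innerSL ℝ (Matrix.toEuclideanLin M⁻¹ y)))) y := by
    intro y
    exact (cutF_hasDerivAt a b (mvq M y)).comp_hasFDerivAt y (mvq_hasFDerivAt hM y)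
  have hΦj : ∀ (y : EuclideanSpace ℝ (Fin n)) (j : Fin n), fderiv ℝ Φ y (EuclideanSpace.single j 1)
      = cutf a b (mvq M y) * (Matrix.toEuclideanLin M⁻¹ y) j := by
    intro y j
    rw [(hΦderiv y).fderiv]
    simp only [ContinuousLinearMap.smul_apply, innerSL_apply_apply, smul_eq_mul]
    rw [EuclideanSpace.inner_single_right]
    simp
    ring
  -- the compact set
  have hK : IsCompact {y : EuclideanSpace ℝ (Fin n) | mvq M y ≤ b} := mvq_isCompact_sublevel hn hM b
  have hV : IsOpen {y : EuclideanSpace ℝ (Fin n) | b < mvq M y} := isOpen_lt continuous_const (mvq_continuous M)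
  -- the vector field components
  set g : Fin n → EuclideanSpace ℝ (Fin n) → ℝ := fun i y => Φ y * fderiv ℝ w y (EuclideanSpace.single i 1) with hgdef
  have hwC1at : ∀ y ∈ U, ContDiffAt ℝ 1 (fderiv ℝ w) y := by
    intro y hy
    exact (hw.contDiffAt (hU.mem_nhds hy)).fderiv_right (m := 1) (by norm_num)
  have hgC1 : ∀ i, ContDiff ℝ 1 (g i) := by
    intro i
    rw [contDiff_iff_contDiffAt]
    intro y
    by_cases hy : y ∈ U
    · exact (hΦ.contDiffAt).mul ((hwC1at y hy).clm_apply contDiffAt_const)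
    · have hyV : b < mvq M y := not_le.mp (fun h => hy (hsub h))
      apply ContDiffAt.congr_of_eventuallyEq (contDiffAt_const (c := (0:ℝ)))
      filter_upwards [hV.mem_nhds (Set.mem_setOf_eq ▸ hyV)] with z hz
      simp [hgdef, hΦzero z (le_of_lt hz)]
  have hgsupp : ∀ i, HasCompactSupport (g i) := by
    intro i
    apply HasCompactSupport.intro hK
    intro y hy
    simp [hgdef, hΦzero y (le_of_lt (not_le.mp hy))]
  -- integrals vanish
  have hIntZero : ∀ i j, ∫ y : EuclideanSpace ℝ (Fin n), fderiv ℝ (g i) y (EuclideanSpace.single j 1) = 0 :=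
    fun i j => integral_fderiv_single_euc hn (g i) (hgC1 i) (hgsupp i) j
  -- pointwise identity
  have hpt : ∀ y : EuclideanSpace ℝ (Fin n), ∑ i : Fin n, ∑ j : Fin n,
      M i j * fderiv ℝ (g i) y (EuclideanSpace.single j 1)
      = cutf a b (mvq M y) * fderiv ℝ w y y := by
    intro y
    by_cases hy : y ∈ U
    · have hdΦ : DifferentiableAt ℝ Φ y := (hΦ.differentiable one_ne_zero) y
      have hdW : ∀ i, DifferentiableAt ℝ (fun z => fderiv ℝ w z (EuclideanSpace.single i 1)) y :=
        fun i => ((hwC1at y hy).clm_apply contDiffAt_const).differentiableAt one_ne_zero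
      have hdW' : DifferentiableAt ℝ (fderiv ℝ w) y := (hwC1at y hy).differentiableAt one_ne_zero
      have hder : ∀ i j, fderiv ℝ (g i) y (EuclideanSpace.single j 1)
          = Φ y * fderiv ℝ (fderiv ℝ w) y (EuclideanSpace.single j 1) (EuclideanSpace.single i 1)
            + fderiv ℝ w y (EuclideanSpace.single i 1)
              * (cutf a b (mvq M y) * (Matrix.toEuclideanLin M⁻¹ y) j) := by
        intro i j
        have h1 : fderiv ℝ (g i) y
            = Φ y • fderiv ℝ (fun z => fderiv ℝ w z (EuclideanSpace.single i 1)) y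
              + (fderiv ℝ w y (EuclideanSpace.single i 1)) • fderiv ℝ Φ y := by
          simp only [hgdef]
          exact fderiv_mul hdΦ (hdW i)
        rw [h1]
        simp only [ContinuousLinearMap.add_apply, ContinuousLinearMap.smul_apply, smul_eq_mul]
        rw [hΦj y j]
        have h2 : fderiv ℝ (fun z => fderiv ℝ w z (EuclideanSpace.single i 1)) y
              (EuclideanSpace.single j 1)
            = fderiv ℝ (fderiv ℝ w) y (EuclideanSpace.single j 1) (EuclideanSpace.single i 1) := by
          rw [fderiv_clm_apply hdW' (differentiableAt_const _)]
          simp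
        rw [h2]
      -- sum it up
      have hsum : ∑ i : Fin n, ∑ j : Fin n,
          M i j * fderiv ℝ (g i) y (EuclideanSpace.single j 1)
          = Φ y * (∑ i : Fin n, ∑ j : Fin n, M i j *
              fderiv ℝ (fderiv ℝ w) y (EuclideanSpace.single j 1) (EuclideanSpace.single i 1))
            + cutf a b (mvq M y) * ∑ i : Fin n,
                fderiv ℝ w y (EuclideanSpace.single i 1)
                  * ∑ j : Fin n, M i j * (Matrix.toEuclideanLin M⁻¹ y) j := by
        simp_rw [hder]
        rw [Finset.mul_sum, Finset.mul_sum, ← Finset.sum_add_distrib]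
        apply Finset.sum_congr rfl
        intro i _
        rw [Finset.mul_sum, Finset.mul_sum, Finset.mul_sum, ← Finset.sum_add_distrib]
        apply Finset.sum_congr rfl
        intro j _
        ring
      rw [hsum]
      have hflip : ∑ i : Fin n, ∑ j : Fin n, M i j *
          fderiv ℝ (fderiv ℝ w) y (EuclideanSpace.single j 1) (EuclideanSpace.single i 1) = 0 := by
        rw [Finset.sum_comm]
        rw [← hharm y hy]
        apply Finset.sum_congr rfl; intro i _
        apply Finset.sum_congr rfl; intro j _
        rw [hMsymm j i]
      rw [hflip, mul_zero, zero_add]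
      congr 1
      have hcoord : ∀ i, ∑ j : Fin n, M i j * (Matrix.toEuclideanLin M⁻¹ y) j = y i :=
        mvq_coord hM y
      simp_rw [hcoord]
      have hexp : fderiv ℝ w y y
          = ∑ i : Fin n, y i * fderiv ℝ w y (EuclideanSpace.single i 1) := by
        calc fderiv ℝ w y y
            = fderiv ℝ w y (∑ i : Fin n, y i • EuclideanSpace.single i (1:ℝ)) := by
              rw [euclidean_sum_single]
          _ = ∑ i : Fin n, y i * fderiv ℝ w y (EuclideanSpace.single i 1) := by
              rw [map_sum (fderiv ℝ w y) (fun i : Fin n => y i • EuclideanSpace.single i (1:ℝ))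
                Finset.univ]
              exact Finset.sum_congr rfl fun i _ => by
                rw [ContinuousLinearMap.map_smul]; simp
      rw [hexp]
      exact Finset.sum_congr rfl fun i _ => mul_comm _ _
    · -- outside U : both sides vanish
      have hyV : b < mvq M y := not_le.mp (fun h => hy (hsub h))
      have hgz : ∀ i, fderiv ℝ (g i) y = 0 := by
        intro i
        have hev : g i =ᶠ[nhds y] (fun _ => (0:ℝ)) := by
          filter_upwards [hV.mem_nhds (Set.mem_setOf_eq ▸ hyV)] with z hz
          simp [hgdef, hΦzero z (le_of_lt hz)]
        rw [hev.fderiv_eq, fderiv_fun_const]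
        rfl
      have hcz : cutf a b (mvq M y) = 0 := cutf_zero hab (le_of_lt hyV)
      simp [hgz, hcz]
  -- integrability
  have hInteg : ∀ i j, Integrable
      (fun y : EuclideanSpace ℝ (Fin n) => fderiv ℝ (g i) y (EuclideanSpace.single j 1)) volume := by
    intro i j
    apply Continuous.integrable_of_hasCompactSupport
    · exact ((hgC1 i).continuous_fderiv one_ne_zero).clm_apply continuous_const
    · exact ((hgsupp i).fderiv ℝ).comp_left (g := fun L : _ →L[ℝ] ℝ => L (EuclideanSpace.single j 1)) rfl
  -- conclude
  have h0 : ∫ y : EuclideanSpace ℝ (Fin n), ∑ i : Fin n, ∑ j : Fin n,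
      M i j * fderiv ℝ (g i) y (EuclideanSpace.single j 1) = 0 := by
    rw [integral_finset_sum]
    · apply Finset.sum_eq_zero
      intro i _
      rw [integral_finset_sum]
      · apply Finset.sum_eq_zero
        intro j _
        rw [integral_const_mul, hIntZero i j, mul_zero]
      · intro j _
        exact (hInteg i j).const_mul _
    · intro i _
      apply integrable_finset_sum
      intro j _
      exact (hInteg i j).const_mul _
  rw [← h0]
  apply integral_congr_ae
  filter_upwards with y
  rw [hpt y]

end KeyIBP

section Avg
variable {n : ℕ} {M : Matrix (Fin n) (Fin n) ℝ}

lemma mvq_isCompact_translated (hn : n ≠ 0) (hM : M.PosDef) (x₀ : EuclideanSpace ℝ (Fin n))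
    (c : ℝ) : IsCompact {x : EuclideanSpace ℝ (Fin n) | mvq M (x - x₀) ≤ c} := by
  have h1 : {x : EuclideanSpace ℝ (Fin n) | mvq M (x - x₀) ≤ c}
      = (fun z => x₀ + z) '' {z : EuclideanSpace ℝ (Fin n) | mvq M z ≤ c} := by
    ext x
    constructor
    · intro hx; exact ⟨x - x₀, hx, by module⟩
    · rintro ⟨z, hz, rfl⟩; simpa using hz
  rw [h1]
  exact (mvq_isCompact_sublevel hn hM c).image (continuous_const.add continuous_id)

lemma mvq_zero (M : Matrix (Fin n) (Fin n) ℝ) : mvq M (0 : EuclideanSpace ℝ (Fin n)) = 0 := by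
  simp [mvq]

set_option maxHeartbeats 1000000 in
lemma avg_cutoff (hn : n ≠ 0) (hM : M.PosDef) (x₀ : EuclideanSpace ℝ (Fin n)) {ρ : ℝ}
    (hρ : 0 < ρ) {u : EuclideanSpace ℝ (Fin n) → ℝ}
    (hu : ContDiffOn ℝ 2 u {x : EuclideanSpace ℝ (Fin n) | mvq M (x - x₀) < ρ ^ 2})
    (hharm : ∀ x : EuclideanSpace ℝ (Fin n), mvq M (x - x₀) < ρ ^ 2 →
      ∑ i : Fin n, ∑ j : Fin n,
        M i j * fderiv ℝ (fderiv ℝ u) x (EuclideanSpace.single i 1) (EuclideanSpace.single j 1)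
          = 0)
    {a b : ℝ} (ha : 0 < a) (hab : a < b) (hb1 : b < 1) :
    ∀ r ∈ Set.Ioo (0:ℝ) ρ,
      (∫ y : EuclideanSpace ℝ (Fin n), u (x₀ + r • y) * cutf a b (mvq M y))
        = u x₀ * ∫ y : EuclideanSpace ℝ (Fin n), cutf a b (mvq M y) := by
  classical
  have hb0 : 0 < b := lt_trans ha hab
  set D : Set (EuclideanSpace ℝ (Fin n)) := {x | mvq M (x - x₀) < ρ ^ 2} with hDdef
  have hDopen : IsOpen D :=
    isOpen_lt ((mvq_continuous M).comp (continuous_id.sub continuous_const)) continuous_const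
  have hx₀D : x₀ ∈ D := by
    simp only [hDdef, Set.mem_setOf_eq, sub_self, mvq_zero]
    positivity
  -- the compact support set K and ambient compact P
  set K : Set (EuclideanSpace ℝ (Fin n)) := {y | mvq M y ≤ b} with hKdef
  have hKc : IsCompact K := mvq_isCompact_sublevel hn hM b
  have hKmeas : MeasurableSet K :=
    (isClosed_le (mvq_continuous M) continuous_const).measurableSet
  have h0K : (0 : EuclideanSpace ℝ (Fin n)) ∈ K := by
    simp only [hKdef, Set.mem_setOf_eq, mvq_zero]; linarith
  set P : Set (EuclideanSpace ℝ (Fin n)) := {x | mvq M (x - x₀) ≤ ρ ^ 2 * b} with hPdef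
  have hPc : IsCompact P := mvq_isCompact_translated hn hM x₀ _
  have hPD : P ⊆ D := by
    intro x hx
    simp only [hPdef, Set.mem_setOf_eq] at hx
    simp only [hDdef, Set.mem_setOf_eq]
    have hρ2 : 0 < ρ ^ 2 := by positivity
    nlinarith
  have hx₀P : x₀ ∈ P := by
    simp only [hPdef, Set.mem_setOf_eq, sub_self, mvq_zero]
    positivity
  have hmemP : ∀ (t : ℝ) (y : EuclideanSpace ℝ (Fin n)), |t| ≤ ρ → mvq M y ≤ b →
      (x₀ + t • y) ∈ P := by
    intro t y ht hy
    simp only [hPdef, Set.mem_setOf_eq, add_sub_cancel_left, mvq_smul]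
    have h1 : t ^ 2 ≤ ρ ^ 2 := by nlinarith [sq_abs t, abs_nonneg t]
    exact mul_le_mul h1 hy (mvq_nonneg hM y) (by positivity)
  -- continuity of u and its derivative on D
  have huc : ContinuousOn u D := hu.continuousOn
  have hufc : ContinuousOn (fderiv ℝ u) D :=
    hu.continuousOn_fderiv_of_isOpen hDopen (by norm_num)
  -- bounds on P
  obtain ⟨C, hC⟩ := hPc.exists_bound_of_continuousOn (hufc.mono hPD)
  obtain ⟨Cu, hCu⟩ := hPc.exists_bound_of_continuousOn (huc.mono hPD)
  have hC0 : 0 ≤ C := le_trans (norm_nonneg _) (hC x₀ hx₀P)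
  have hCu0 : 0 ≤ Cu := le_trans (norm_nonneg _) (hCu x₀ hx₀P)
  obtain ⟨R0, hR0⟩ := hKc.isBounded.subset_closedBall 0
  have hR0' : 0 ≤ R0 := by
    have := hR0 h0K
    simpa using this
  have hyR0 : ∀ y ∈ K, ‖y‖ ≤ R0 := by
    intro y hy
    have := hR0 hy
    simpa [Metric.mem_closedBall, dist_zero_right] using this
  -- measurability of the integrands
  have hAESM : ∀ t : ℝ, |t| ≤ ρ →
      AEStronglyMeasurable (fun y : EuclideanSpace ℝ (Fin n) =>
        u (x₀ + t • y) * cutf a b (mvq M y)) volume := by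
    intro t ht
    have heq : (fun y : EuclideanSpace ℝ (Fin n) => u (x₀ + t • y) * cutf a b (mvq M y))
        = fun y => (K.indicator (fun y => u (x₀ + t • y)) y) * cutf a b (mvq M y) := by
      funext y
      by_cases hy : mvq M y ≤ b
      · rw [Set.indicator_of_mem (show y ∈ K from hy)]
      · rw [Set.indicator_of_notMem (show y ∉ K from hy), cutf_zero hab (le_of_lt (not_le.mp hy)), mul_zero,
          zero_mul]
    rw [heq]
    apply AEStronglyMeasurable.mul
    · rw [aestronglyMeasurable_indicator_iff hKmeas]
      apply ContinuousOn.aestronglyMeasurable _ hKmeas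
      apply huc.comp ((continuous_const.add (continuous_id.const_smul t)).continuousOn)
      intro y hy
      exact hPD (hmemP t y ht hy)
    · exact ((cutf_continuous a b).comp (mvq_continuous M)).aestronglyMeasurable
  have hAESM' : ∀ t : ℝ, |t| ≤ ρ →
      AEStronglyMeasurable (fun y : EuclideanSpace ℝ (Fin n) =>
        fderiv ℝ u (x₀ + t • y) y * cutf a b (mvq M y)) volume := by
    intro t ht
    have heq : (fun y : EuclideanSpace ℝ (Fin n) => fderiv ℝ u (x₀ + t • y) y * cutf a b (mvq M y))
        = fun y => (K.indicator (fun y => fderiv ℝ u (x₀ + t • y) y) y) * cutf a b (mvq M y) := by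
      funext y
      by_cases hy : mvq M y ≤ b
      · rw [Set.indicator_of_mem (show y ∈ K from hy)]
      · rw [Set.indicator_of_notMem (show y ∉ K from hy), cutf_zero hab (le_of_lt (not_le.mp hy)), mul_zero,
          zero_mul]
    rw [heq]
    apply AEStronglyMeasurable.mul
    · rw [aestronglyMeasurable_indicator_iff hKmeas]
      apply ContinuousOn.aestronglyMeasurable _ hKmeas
      apply ContinuousOn.clm_apply _ continuousOn_id
      apply hufc.comp ((continuous_const.add (continuous_id.const_smul t)).continuousOn)
      intro y hy
      exact hPD (hmemP t y ht hy)
    · exact ((cutf_continuous a b).comp (mvq_continuous M)).aestronglyMeasurable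
  -- integrability of the integrand
  have hboundInt : Integrable (K.indicator (fun _ => Cu)) volume :=
    (integrable_indicator_iff hKmeas).mpr (integrableOn_const hKc.measure_lt_top.ne)
  have hFint : ∀ t : ℝ, |t| ≤ ρ →
      Integrable (fun y : EuclideanSpace ℝ (Fin n) =>
        u (x₀ + t • y) * cutf a b (mvq M y)) volume := by
    intro t ht
    apply Integrable.mono' hboundInt (hAESM t ht)
    filter_upwards with y
    by_cases hy : mvq M y ≤ b
    · rw [Set.indicator_of_mem (show y ∈ K from hy)]
      have h1 : ‖u (x₀ + t • y)‖ ≤ Cu := hCu _ (hmemP t y ht hy)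
      calc ‖u (x₀ + t • y) * cutf a b (mvq M y)‖
          = ‖u (x₀ + t • y)‖ * ‖cutf a b (mvq M y)‖ := norm_mul _ _
        _ ≤ Cu * 1 := by
            apply mul_le_mul h1 _ (norm_nonneg _) hCu0
            rw [Real.norm_eq_abs, abs_of_nonneg (cutf_nonneg a b _)]
            exact cutf_le_one a b _
        _ = Cu := mul_one Cu
    · rw [Set.indicator_of_notMem (show y ∉ K from hy), cutf_zero hab (le_of_lt (not_le.mp hy)), mul_zero]
      simp
  set F : ℝ → ℝ := fun t => ∫ y : EuclideanSpace ℝ (Fin n),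
    u (x₀ + t • y) * cutf a b (mvq M y) with hFdef
  -- STEP A : F has zero derivative on (0, ρ)
  have hDeriv : ∀ s ∈ Set.Ioo (0:ℝ) ρ, HasDerivAt F 0 s := by
    rintro s ⟨hs0, hsρ⟩
    set ε := min (s / 2) ((ρ - s) / 2) with hε
    have hε0 : 0 < ε := lt_min (by linarith) (by linarith)
    have hball : ∀ t ∈ Metric.ball s ε, 0 < t ∧ t < ρ := by
      intro t ht
      rw [Metric.mem_ball, Real.dist_eq, abs_lt] at ht
      have h1 := min_le_left (s / 2) ((ρ - s) / 2)
      have h2 := min_le_right (s / 2) ((ρ - s) / 2)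
      constructor <;> [linarith [ht.1]; linarith [ht.2]]
    have hDer := hasDerivAt_integral_of_dominated_loc_of_deriv_le (F := fun t y =>
        u (x₀ + t • y) * cutf a b (mvq M y))
      (F' := fun t y => fderiv ℝ u (x₀ + t • y) y * cutf a b (mvq M y))
      (bound := K.indicator (fun _ => C * R0)) (Metric.ball_mem_nhds s hε0)
      (by
        filter_upwards [Metric.ball_mem_nhds s hε0] with t ht
        obtain ⟨ht0, htρ⟩ := hball t ht
        exact hAESM t (by rw [abs_of_pos ht0]; linarith))
      (hFint s (by rw [abs_of_pos hs0]; linarith))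
      (hAESM' s (by rw [abs_of_pos hs0]; linarith))
      (by
        filter_upwards with y
        intro t ht
        obtain ⟨ht0, htρ⟩ := hball t ht
        by_cases hy : mvq M y ≤ b
        · rw [Set.indicator_of_mem (show y ∈ K from hy)]
          have h1 : ‖fderiv ℝ u (x₀ + t • y)‖ ≤ C :=
            hC _ (hmemP t y (by rw [abs_of_pos ht0]; linarith) hy)
          have h2 : ‖y‖ ≤ R0 := hyR0 y hy
          calc ‖fderiv ℝ u (x₀ + t • y) y * cutf a b (mvq M y)‖
              = ‖fderiv ℝ u (x₀ + t • y) y‖ * ‖cutf a b (mvq M y)‖ := norm_mul _ _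
            _ ≤ (C * R0) * 1 := by
                apply mul_le_mul _ _ (norm_nonneg _) (by positivity)
                · calc ‖fderiv ℝ u (x₀ + t • y) y‖
                      ≤ ‖fderiv ℝ u (x₀ + t • y)‖ * ‖y‖ :=
                        ContinuousLinearMap.le_opNorm _ _
                    _ ≤ C * R0 := mul_le_mul h1 h2 (norm_nonneg _) hC0
                · rw [Real.norm_eq_abs, abs_of_nonneg (cutf_nonneg a b _)]
                  exact cutf_le_one a b _
            _ = C * R0 := mul_one _
        · rw [Set.indicator_of_notMem (show y ∉ K from hy), cutf_zero hab (le_of_lt (not_le.mp hy)), mul_zero]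
          simp)
      ((integrable_indicator_iff hKmeas).mpr (integrableOn_const hKc.measure_lt_top.ne))
      (by
        filter_upwards with y
        intro t ht
        obtain ⟨ht0, htρ⟩ := hball t ht
        by_cases hy : mvq M y ≤ b
        · have hmem : (x₀ + t • y) ∈ D := hPD (hmemP t y (by rw [abs_of_pos ht0]; linarith) hy)
          have hdu : HasFDerivAt u (fderiv ℝ u (x₀ + t • y)) (x₀ + t • y) :=
            (((hu.contDiffAt (hDopen.mem_nhds hmem)).differentiableAt
              (by norm_num)).hasFDerivAt)
          have hda : HasDerivAt (fun t : ℝ => x₀ + t • y) y t := by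
            simpa using ((hasDerivAt_id t).smul_const y).const_add x₀
          exact (hdu.comp_hasDerivAt t hda).mul_const _
        · have hcz : cutf a b (mvq M y) = 0 := cutf_zero hab (le_of_lt (not_le.mp hy))
          simp only [hcz, mul_zero]
          exact hasDerivAt_const t 0)
    -- now identify the derivative with 0 via the key integration by parts lemma
    set w : EuclideanSpace ℝ (Fin n) → ℝ := fun y => u (x₀ + s • y) with hwdef
    set U : Set (EuclideanSpace ℝ (Fin n)) := {y | mvq M (s • y) < ρ ^ 2} with hUdef
    have hUopen : IsOpen U :=
      isOpen_lt ((mvq_continuous M).comp (continuous_id.const_smul s)) continuous_const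
    have hUsub : {y : EuclideanSpace ℝ (Fin n) | mvq M y ≤ b} ⊆ U := by
      intro y hy
      simp only [hUdef, Set.mem_setOf_eq, mvq_smul]
      have h1 : s ^ 2 * mvq M y ≤ s ^ 2 * b :=
        mul_le_mul_of_nonneg_left hy (sq_nonneg s)
      nlinarith
    have hmapU : ∀ y ∈ U, (x₀ + s • y) ∈ D := by
      intro y hy
      simpa only [hDdef, hUdef, Set.mem_setOf_eq, add_sub_cancel_left] using hy
    have haff : ∀ y : EuclideanSpace ℝ (Fin n), HasFDerivAt (fun z => x₀ + s • z)
        (s • ContinuousLinearMap.id ℝ (EuclideanSpace ℝ (Fin n))) y := by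
      intro y
      exact ((hasFDerivAt_id y).const_smul s).const_add x₀
    have hwC2 : ContDiffOn ℝ 2 w U := by
      apply hu.comp
      · exact (contDiff_const.add (contDiff_id.const_smul s)).contDiffOn
      · intro y hy
        exact hmapU y hy
    have hwfd : ∀ y ∈ U, fderiv ℝ w y = s • fderiv ℝ u (x₀ + s • y) := by
      intro y hy
      have hdu : HasFDerivAt u (fderiv ℝ u (x₀ + s • y)) (x₀ + s • y) :=
        ((hu.contDiffAt (hDopen.mem_nhds (hmapU y hy))).differentiableAt
          (by norm_num)).hasFDerivAt
      have h4 := hdu.comp y (haff y)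
      have h5 : (fderiv ℝ u (x₀ + s • y)).comp
            (s • ContinuousLinearMap.id ℝ (EuclideanSpace ℝ (Fin n)))
          = s • fderiv ℝ u (x₀ + s • y) := by
        ext v
        simp
      rw [h5] at h4
      exact h4.fderiv
    have hw2 : ∀ y ∈ U, ∀ i j : Fin n,
        fderiv ℝ (fderiv ℝ w) y (EuclideanSpace.single i 1) (EuclideanSpace.single j 1)
        = s ^ 2 * fderiv ℝ (fderiv ℝ u) (x₀ + s • y)
            (EuclideanSpace.single i 1) (EuclideanSpace.single j 1) := by
      intro y hy i j
      have hev : fderiv ℝ w =ᶠ[nhds y] fun z => s • fderiv ℝ u (x₀ + s • z) := by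
        filter_upwards [hUopen.mem_nhds hy] with z hz
        exact hwfd z hz
      rw [hev.fderiv_eq]
      have hdu2 : DifferentiableAt ℝ (fderiv ℝ u) (x₀ + s • y) :=
        (((hu.contDiffAt (hDopen.mem_nhds (hmapU y hy))).fderiv_right (m := 1)
          (by norm_num)).differentiableAt one_ne_zero)
      have h6 : HasFDerivAt (fun z => s • fderiv ℝ u (x₀ + s • z))
          (s • ((fderiv ℝ (fderiv ℝ u) (x₀ + s • y)).comp
            (s • ContinuousLinearMap.id ℝ (EuclideanSpace ℝ (Fin n))))) y :=
        (hdu2.hasFDerivAt.comp y (haff y)).const_smul s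
      rw [h6.fderiv]
      simp only [ContinuousLinearMap.smul_apply, ContinuousLinearMap.coe_comp',
        Function.comp_apply, ContinuousLinearMap.coe_id', id_eq, smul_eq_mul]
      rw [ContinuousLinearMap.map_smul]
      simp only [ContinuousLinearMap.smul_apply, smul_eq_mul]
      ring
    have hwharm : ∀ y ∈ U, ∑ i : Fin n, ∑ j : Fin n,
        M i j * fderiv ℝ (fderiv ℝ w) y (EuclideanSpace.single i 1)
          (EuclideanSpace.single j 1) = 0 := by
      intro y hy
      have hh := hharm (x₀ + s • y) (by
        have := hmapU y hy
        simpa only [hDdef, Set.mem_setOf_eq] using this)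
      have hsum : ∑ i : Fin n, ∑ j : Fin n,
          M i j * fderiv ℝ (fderiv ℝ w) y (EuclideanSpace.single i 1)
            (EuclideanSpace.single j 1)
          = s ^ 2 * ∑ i : Fin n, ∑ j : Fin n,
            M i j * fderiv ℝ (fderiv ℝ u) (x₀ + s • y) (EuclideanSpace.single i 1)
              (EuclideanSpace.single j 1) := by
        rw [Finset.mul_sum]
        apply Finset.sum_congr rfl
        intro i _
        rw [Finset.mul_sum]
        apply Finset.sum_congr rfl
        intro j _
        rw [hw2 y hy i j]
        ring
      rw [hsum, hh, mul_zero]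
    have hkey := key_ibp hn hM ha hab hUopen hUsub hwC2 hwharm
    have hmatch : ∀ y : EuclideanSpace ℝ (Fin n),
        fderiv ℝ u (x₀ + s • y) y * cutf a b (mvq M y)
        = (1 / s) * (cutf a b (mvq M y) * fderiv ℝ w y y) := by
      intro y
      by_cases hy : mvq M y ≤ b
      · have hyU : y ∈ U := hUsub hy
        rw [hwfd y hyU]
        simp only [ContinuousLinearMap.smul_apply, smul_eq_mul]
        field_simp
      · rw [cutf_zero hab (le_of_lt (not_le.mp hy))]
        ring
    have hIntF' : (∫ y : EuclideanSpace ℝ (Fin n),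
        fderiv ℝ u (x₀ + s • y) y * cutf a b (mvq M y)) = 0 := by
      calc (∫ y : EuclideanSpace ℝ (Fin n), fderiv ℝ u (x₀ + s • y) y * cutf a b (mvq M y))
          = ∫ y : EuclideanSpace ℝ (Fin n),
              (1 / s) * (cutf a b (mvq M y) * fderiv ℝ w y y) := by
            apply integral_congr_ae
            filter_upwards with y
            exact hmatch y
        _ = (1 / s) * ∫ y : EuclideanSpace ℝ (Fin n),
              cutf a b (mvq M y) * fderiv ℝ w y y := integral_const_mul _ _
        _ = 0 := by rw [hkey, mul_zero]
    rw [← hIntF']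
    exact hDer.2
  -- STEP B : F is constant on (0, ρ)
  have hconst : ∀ r₁ ∈ Set.Ioo (0:ℝ) ρ, ∀ r₂ ∈ Set.Ioo (0:ℝ) ρ, F r₁ = F r₂ := by
    have key : ∀ r₁ r₂ : ℝ, r₁ ∈ Set.Ioo (0:ℝ) ρ → r₂ ∈ Set.Ioo (0:ℝ) ρ → r₁ ≤ r₂ →
        F r₁ = F r₂ := by
      intro r₁ r₂ h1 h2 h12
      have hsub2 : Set.Icc r₁ r₂ ⊆ Set.Ioo (0:ℝ) ρ := fun t ht =>
        ⟨lt_of_lt_of_le h1.1 ht.1, lt_of_le_of_lt ht.2 h2.2⟩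
      have hcc := constant_of_has_deriv_right_zero (f := F) (a := r₁) (b := r₂)
        (fun t ht => (hDeriv t (hsub2 ht)).continuousAt.continuousWithinAt)
        (fun t ht => (hDeriv t (hsub2 (Set.Ico_subset_Icc_self ht))).hasDerivWithinAt)
      exact (hcc r₂ (Set.right_mem_Icc.mpr h12)).symm
    intro r₁ h1 r₂ h2
    rcases le_total r₁ r₂ with h | h
    exacts [key r₁ r₂ h1 h2 h, (key r₂ r₁ h2 h1 h).symm]
  -- STEP C : limit as r → 0
  have hseq : ∀ k : ℕ, ρ / ((k : ℝ) + 2) ∈ Set.Ioo (0:ℝ) ρ := by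
    intro k
    have hk2 : (0:ℝ) < (k : ℝ) + 2 := by positivity
    constructor
    · exact div_pos hρ hk2
    · rw [div_lt_iff₀ hk2]
      have : (1:ℝ) < (k:ℝ) + 2 := by
        have := Nat.cast_nonneg (α := ℝ) k
        linarith
      nlinarith
  have hseqle : ∀ k : ℕ, |ρ / ((k : ℝ) + 2)| ≤ ρ := by
    intro k
    have hk2 : (0:ℝ) < (k : ℝ) + 2 := by positivity
    rw [abs_of_pos (div_pos hρ hk2), div_le_iff₀ hk2]
    nlinarith [Nat.cast_nonneg (α := ℝ) k]
  have hlim : Filter.Tendsto (fun k : ℕ => F (ρ / ((k : ℝ) + 2))) Filter.atTop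
      (nhds (∫ y : EuclideanSpace ℝ (Fin n), u x₀ * cutf a b (mvq M y))) := by
    apply tendsto_integral_of_dominated_convergence (K.indicator (fun _ => Cu))
    · intro k
      exact hAESM _ (hseqle k)
    · exact hboundInt
    · intro k
      filter_upwards with y
      by_cases hy : mvq M y ≤ b
      · rw [Set.indicator_of_mem (show y ∈ K from hy)]
        have h1 : ‖u (x₀ + (ρ / ((k : ℝ) + 2)) • y)‖ ≤ Cu := hCu _ (hmemP _ y (hseqle k) hy)
        calc ‖u (x₀ + (ρ / ((k : ℝ) + 2)) • y) * cutf a b (mvq M y)‖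
            = ‖u (x₀ + (ρ / ((k : ℝ) + 2)) • y)‖ * ‖cutf a b (mvq M y)‖ := norm_mul _ _
          _ ≤ Cu * 1 := by
              apply mul_le_mul h1 _ (norm_nonneg _) hCu0
              rw [Real.norm_eq_abs, abs_of_nonneg (cutf_nonneg a b _)]
              exact cutf_le_one a b _
          _ = Cu := mul_one Cu
      · rw [Set.indicator_of_notMem (show y ∉ K from hy), cutf_zero hab (le_of_lt (not_le.mp hy)), mul_zero]
        simp
    · filter_upwards with y
      apply Filter.Tendsto.mul_const
      have hcont : ContinuousAt u x₀ := huc.continuousAt (hDopen.mem_nhds hx₀D)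
      apply hcont.tendsto.comp
      have h0 : Filter.Tendsto (fun k : ℕ => (k : ℝ) + 2) Filter.atTop Filter.atTop :=
        Filter.tendsto_atTop_add_const_right _ 2 tendsto_natCast_atTop_atTop
      have h1 : Filter.Tendsto (fun k : ℕ => ρ / ((k : ℝ) + 2)) Filter.atTop (nhds 0) := by
        have := h0.inv_tendsto_atTop
        have h2 := this.const_mul ρ
        simp only [mul_zero] at h2
        simpa [div_eq_mul_inv] using h2
      have h3 := (h1.smul_const y).const_add x₀
      simpa using h3
  intro r hr
  have hconst_seq : ∀ k : ℕ, F (ρ / ((k : ℝ) + 2)) = F r := fun k => hconst _ (hseq k) r hr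
  have hlim2 : Filter.Tendsto (fun k : ℕ => F (ρ / ((k : ℝ) + 2))) Filter.atTop (nhds (F r)) := by
    simp_rw [hconst_seq]
    exact tendsto_const_nhds
  have hFr := tendsto_nhds_unique hlim2 hlim
  calc F r = ∫ y : EuclideanSpace ℝ (Fin n), u x₀ * cutf a b (mvq M y) := hFr
    _ = u x₀ * ∫ y : EuclideanSpace ℝ (Fin n), cutf a b (mvq M y) := integral_const_mul _ _

end Avg


set_option maxHeartbeats 1000000

/-- Proposition C, solid mean value property over Wulff balls under (H_M):
Let `x₀ ∈ ℝⁿ`, `ρ > 0`, and `u` twice continuously differentiable on the Wulff ball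
`B_ρ(x₀) = {x : H*(x − x₀) < ρ}` with `tr(M · Hess u) = 0` there (`Δ^H u = 0`). Then for
every `r ∈ (0, ρ)`: `u(x₀) = (1/(κ rⁿ)) ∫_{B_r(x₀)} u dx`, where `H*(x) = √⟨M⁻¹x, x⟩` and
`κ` is the Lebesgue measure of the unit Wulff ball `{x : H*(x) < 1}`. -/
theorem stmt_16 {n : ℕ} (hn : 2 ≤ n)
    (M : Matrix (Fin n) (Fin n) ℝ) (hM : M.PosDef)
    (x₀ : EuclideanSpace ℝ (Fin n)) (ρ : ℝ) (hρ : 0 < ρ)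
    (u : EuclideanSpace ℝ (Fin n) → ℝ)
    (hu : ContDiffOn ℝ 2 u
      {x : EuclideanSpace ℝ (Fin n) | Real.sqrt ⟪Matrix.toEuclideanLin M⁻¹ (x - x₀), x - x₀⟫ < ρ})
    (hharm : ∀ x : EuclideanSpace ℝ (Fin n),
      Real.sqrt ⟪Matrix.toEuclideanLin M⁻¹ (x - x₀), x - x₀⟫ < ρ →
      ∑ i : Fin n, ∑ j : Fin n,
        M i j * fderiv ℝ (fderiv ℝ u) x (EuclideanSpace.single i 1) (EuclideanSpace.single j 1)
          = 0)
    (κ : ℝ)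
    (hκ : κ = (volume {x : EuclideanSpace ℝ (Fin n) |
      Real.sqrt ⟪Matrix.toEuclideanLin M⁻¹ x, x⟫ < 1}).toReal) :
    ∀ r : ℝ, r ∈ Set.Ioo 0 ρ →
      u x₀ = (1 / (κ * r ^ n)) *
        ∫ x in {x : EuclideanSpace ℝ (Fin n) |
          Real.sqrt ⟪Matrix.toEuclideanLin M⁻¹ (x - x₀), x - x₀⟫ < r}, u x := by
  classical
  intro r hr
  obtain ⟨hr0, hrρ⟩ := hr
  have hn0 : n ≠ 0 := by omega
  -- rephrase hypotheses via mvq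
  have hsetρ : {x : EuclideanSpace ℝ (Fin n) |
      Real.sqrt ⟪Matrix.toEuclideanLin M⁻¹ (x - x₀), x - x₀⟫ < ρ}
      = {x : EuclideanSpace ℝ (Fin n) | mvq M (x - x₀) < ρ ^ 2} := by
    ext x
    exact Real.sqrt_lt' hρ
  have hu' : ContDiffOn ℝ 2 u {x : EuclideanSpace ℝ (Fin n) | mvq M (x - x₀) < ρ ^ 2} := by
    rw [← hsetρ]; exact hu
  have hharm' : ∀ x : EuclideanSpace ℝ (Fin n), mvq M (x - x₀) < ρ ^ 2 →
      ∑ i : Fin n, ∑ j : Fin n,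
        M i j * fderiv ℝ (fderiv ℝ u) x (EuclideanSpace.single i 1) (EuclideanSpace.single j 1)
          = 0 := fun x hx => hharm x ((Real.sqrt_lt' hρ).mpr hx)
  -- basic sets
  set W : Set (EuclideanSpace ℝ (Fin n)) := {y | mvq M y < 1} with hWdef
  have hWopen : IsOpen W := isOpen_lt (mvq_continuous M) continuous_const
  have hWmeas : MeasurableSet W := hWopen.measurableSet
  have h0W : (0 : EuclideanSpace ℝ (Fin n)) ∈ W := by
    simp only [hWdef, Set.mem_setOf_eq, mvq_zero]; norm_num
  set K1 : Set (EuclideanSpace ℝ (Fin n)) := {y | mvq M y ≤ 1} with hK1def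
  have hK1c : IsCompact K1 := mvq_isCompact_sublevel hn0 hM 1
  have hK1meas : MeasurableSet K1 :=
    (isClosed_le (mvq_continuous M) continuous_const).measurableSet
  -- κ is positive
  have hκval : κ = (volume W).toReal := by
    rw [hκ]
    congr 2
    ext x
    rw [Set.mem_setOf_eq, Real.sqrt_lt' one_pos, one_pow]
    exact Iff.rfl
  have hκpos : 0 < κ := by
    rw [hκval]
    apply ENNReal.toReal_pos
    · exact (hWopen.measure_pos volume ⟨0, h0W⟩).ne'
    · exact (lt_of_le_of_lt (measure_mono (show W ⊆ K1 from fun y hy => show mvq M y ≤ 1 from le_of_lt hy)) hK1c.measure_lt_top).ne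
  -- bound of u on the compact {x | mvq M (x-x₀) ≤ r^2}
  set P1 : Set (EuclideanSpace ℝ (Fin n)) := {x | mvq M (x - x₀) ≤ r ^ 2} with hP1def
  have hP1c : IsCompact P1 := mvq_isCompact_translated hn0 hM x₀ _
  have hP1D : P1 ⊆ {x : EuclideanSpace ℝ (Fin n) | mvq M (x - x₀) < ρ ^ 2} := by
    intro x hx
    simp only [hP1def, Set.mem_setOf_eq] at hx
    have : r ^ 2 < ρ ^ 2 := by nlinarith
    exact lt_of_le_of_lt hx this
  obtain ⟨Cu, hCu⟩ := hP1c.exists_bound_of_continuousOn ((hu'.continuousOn).mono hP1D)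
  have hx₀P1 : x₀ ∈ P1 := by
    simp only [hP1def, Set.mem_setOf_eq, sub_self, mvq_zero]; positivity
  have hCu0 : 0 ≤ Cu := le_trans (norm_nonneg _) (hCu x₀ hx₀P1)
  have hmemP1 : ∀ y : EuclideanSpace ℝ (Fin n), mvq M y ≤ 1 → (x₀ + r • y) ∈ P1 := by
    intro y hy
    simp only [hP1def, Set.mem_setOf_eq, add_sub_cancel_left, mvq_smul]
    nlinarith [mvq_nonneg hM y]
  -- sequences of cutoffs
  set A : ℕ → ℝ := fun k => 1 - 2 / ((k : ℝ) + 4) with hAdef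
  set B : ℕ → ℝ := fun k => 1 - 1 / ((k : ℝ) + 4) with hBdef
  have hk4 : ∀ k : ℕ, (0:ℝ) < (k : ℝ) + 4 := fun k => by positivity
  have hA0 : ∀ k, 0 < A k := by
    intro k
    simp only [hAdef, sub_pos]
    rw [div_lt_one (hk4 k)]
    have := Nat.cast_nonneg (α := ℝ) k
    linarith
  have hAB : ∀ k, A k < B k := by
    intro k
    simp only [hAdef, hBdef, sub_lt_sub_iff_left]
    gcongr
    norm_num
  have hB1 : ∀ k, B k < 1 := by
    intro k
    simp only [hBdef]
    have : (0:ℝ) < 1 / ((k : ℝ) + 4) := by positivity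
    linarith
  -- apply avg_cutoff for each k
  have havg : ∀ k : ℕ,
      (∫ y : EuclideanSpace ℝ (Fin n), u (x₀ + r • y) * cutf (A k) (B k) (mvq M y))
      = u x₀ * ∫ y : EuclideanSpace ℝ (Fin n), cutf (A k) (B k) (mvq M y) := fun k =>
    avg_cutoff hn0 hM x₀ hρ hu' hharm' (hA0 k) (hAB k) (hB1 k) r ⟨hr0, hrρ⟩
  -- pointwise convergence of the cutoffs to the indicator of W
  have hptwise : ∀ y : EuclideanSpace ℝ (Fin n),
      Filter.Tendsto (fun k : ℕ => cutf (A k) (B k) (mvq M y)) Filter.atTop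
        (nhds (W.indicator (fun _ => (1:ℝ)) y)) := by
    intro y
    by_cases hy : mvq M y < 1
    · rw [Set.indicator_of_mem (show y ∈ W from hy)]
      obtain ⟨N, hN⟩ := exists_nat_gt (2 / (1 - mvq M y))
      apply Filter.Tendsto.congr' _ tendsto_const_nhds
      rw [Filter.EventuallyEq, Filter.eventually_atTop]
      refine ⟨N, fun k hk => ?_⟩
      have h1 : 0 < 1 - mvq M y := by linarith
      have h2 : 2 / (1 - mvq M y) < (k:ℝ) + 4 := by
        have hNk : (N:ℝ) ≤ (k:ℝ) := Nat.cast_le.mpr hk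
        linarith
      have h3 : 2 / ((k:ℝ) + 4) < 1 - mvq M y := by
        rw [div_lt_iff₀ (hk4 k)]
        rw [div_lt_iff₀ h1] at h2
        nlinarith
      exact (cutf_one (hAB k) (by simp only [hAdef]; linarith)).symm
    · push_neg at hy
      rw [Set.indicator_of_notMem (show y ∉ W from by simp [hWdef, not_lt, hy])]
      have hz : ∀ k : ℕ, cutf (A k) (B k) (mvq M y) = 0 := fun k =>
        cutf_zero (hAB k) (le_trans (hB1 k).le hy)
      simp only [hz]
      exact tendsto_const_nhds
  -- limit of the integrals of cutoffs : κ
  have hbound1 : Integrable (K1.indicator (fun _ => (1:ℝ))) volume :=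
    (integrable_indicator_iff hK1meas).mpr (integrableOn_const hK1c.measure_lt_top.ne)
  have hlimB : Filter.Tendsto
      (fun k : ℕ => ∫ y : EuclideanSpace ℝ (Fin n), cutf (A k) (B k) (mvq M y))
      Filter.atTop (nhds κ) := by
    have hdc := tendsto_integral_of_dominated_convergence (μ := volume)
      (F := fun (k : ℕ) (y : EuclideanSpace ℝ (Fin n)) => cutf (A k) (B k) (mvq M y))
      (f := W.indicator (fun _ => (1:ℝ))) (K1.indicator (fun _ => (1:ℝ)))
      (fun k => ((cutf_continuous _ _).comp (mvq_continuous M)).aestronglyMeasurable)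
      hbound1
      (fun k => by
        filter_upwards with y
        by_cases hy : mvq M y ≤ 1
        · rw [Set.indicator_of_mem (show y ∈ K1 from hy)]
          rw [Real.norm_eq_abs, abs_of_nonneg (cutf_nonneg _ _ _)]
          exact cutf_le_one _ _ _
        · rw [Set.indicator_of_notMem (show y ∉ K1 from hy)]
          rw [cutf_zero (hAB k) (le_trans (hB1 k).le (le_of_not_ge hy))]
          simp)
      (by filter_upwards with y; exact hptwise y)
    have hid : (∫ y : EuclideanSpace ℝ (Fin n), W.indicator (fun _ => (1:ℝ)) y) = κ := by
      rw [integral_indicator hWmeas, setIntegral_const, smul_eq_mul, mul_one, hκval, measureReal_def]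
    rw [hid] at hdc
    exact hdc
  -- measurability of the numerator integrands
  have hAESMk : ∀ k : ℕ, AEStronglyMeasurable
      (fun y : EuclideanSpace ℝ (Fin n) => u (x₀ + r • y) * cutf (A k) (B k) (mvq M y))
      volume := by
    intro k
    have heq : (fun y : EuclideanSpace ℝ (Fin n) => u (x₀ + r • y) * cutf (A k) (B k) (mvq M y))
        = fun y => (K1.indicator (fun y => u (x₀ + r • y)) y) * cutf (A k) (B k) (mvq M y) := by
      funext y
      by_cases hy : mvq M y ≤ 1
      · rw [Set.indicator_of_mem (show y ∈ K1 from hy)]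
      · rw [Set.indicator_of_notMem (show y ∉ K1 from hy),
          cutf_zero (hAB k) (le_trans (hB1 k).le (le_of_not_ge hy)), mul_zero, zero_mul]
    rw [heq]
    apply AEStronglyMeasurable.mul
    · rw [aestronglyMeasurable_indicator_iff hK1meas]
      apply ContinuousOn.aestronglyMeasurable _ hK1meas
      apply (hu'.continuousOn).comp
        ((continuous_const.add (continuous_id.const_smul r)).continuousOn)
      intro y hy
      exact hP1D (hmemP1 y hy)
    · exact ((cutf_continuous _ _).comp (mvq_continuous M)).aestronglyMeasurable
  have hbound2 : Integrable (K1.indicator (fun _ => Cu)) volume :=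
    (integrable_indicator_iff hK1meas).mpr (integrableOn_const hK1c.measure_lt_top.ne)
  -- limit of the numerators
  have hlimA : Filter.Tendsto
      (fun k : ℕ => ∫ y : EuclideanSpace ℝ (Fin n), u (x₀ + r • y) * cutf (A k) (B k) (mvq M y))
      Filter.atTop
      (nhds (∫ y : EuclideanSpace ℝ (Fin n), W.indicator (fun y => u (x₀ + r • y)) y)) := by
    apply tendsto_integral_of_dominated_convergence (K1.indicator (fun _ => Cu)) hAESMk hbound2
    · intro k
      filter_upwards with y
      by_cases hy : mvq M y ≤ 1
      · rw [Set.indicator_of_mem (show y ∈ K1 from hy)]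
        have h1 : ‖u (x₀ + r • y)‖ ≤ Cu := hCu _ (hmemP1 y hy)
        calc ‖u (x₀ + r • y) * cutf (A k) (B k) (mvq M y)‖
            = ‖u (x₀ + r • y)‖ * ‖cutf (A k) (B k) (mvq M y)‖ := norm_mul _ _
          _ ≤ Cu * 1 := by
              apply mul_le_mul h1 _ (norm_nonneg _) hCu0
              rw [Real.norm_eq_abs, abs_of_nonneg (cutf_nonneg _ _ _)]
              exact cutf_le_one _ _ _
          _ = Cu := mul_one _
      · rw [Set.indicator_of_notMem (show y ∉ K1 from hy),
          cutf_zero (hAB k) (le_trans (hB1 k).le (le_of_not_ge hy)), mul_zero]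
        simp
    · filter_upwards with y
      have h := (hptwise y).const_mul (u (x₀ + r • y))
      have hrw : W.indicator (fun y => u (x₀ + r • y)) y
          = u (x₀ + r • y) * W.indicator (fun _ => (1:ℝ)) y := by
        by_cases hy : y ∈ W
        · rw [Set.indicator_of_mem hy, Set.indicator_of_mem hy, mul_one]
        · rw [Set.indicator_of_notMem hy, Set.indicator_of_notMem hy, mul_zero]
      rw [hrw]
      exact h
  -- the key mean value identity over W
  have hkey : (∫ y : EuclideanSpace ℝ (Fin n), W.indicator (fun y => u (x₀ + r • y)) y)
      = u x₀ * κ := by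
    have h1 : Filter.Tendsto
        (fun k : ℕ => ∫ y : EuclideanSpace ℝ (Fin n), u (x₀ + r • y) * cutf (A k) (B k) (mvq M y))
        Filter.atTop (nhds (u x₀ * κ)) := by
      have heq : (fun k : ℕ => ∫ y : EuclideanSpace ℝ (Fin n),
            u (x₀ + r • y) * cutf (A k) (B k) (mvq M y))
          = fun k => u x₀ * ∫ y : EuclideanSpace ℝ (Fin n), cutf (A k) (B k) (mvq M y) :=
        funext fun k => havg k
      rw [heq]
      exact hlimB.const_mul (u x₀)
    exact tendsto_nhds_unique hlimA h1
  -- change of variables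
  have hsetr : {x : EuclideanSpace ℝ (Fin n) |
      Real.sqrt ⟪Matrix.toEuclideanLin M⁻¹ (x - x₀), x - x₀⟫ < r}
      = {x : EuclideanSpace ℝ (Fin n) | mvq M (x - x₀) < r ^ 2} := by
    ext x
    exact Real.sqrt_lt' hr0
  set T : Set (EuclideanSpace ℝ (Fin n)) := {z | mvq M z < r ^ 2} with hTdef
  have hTmeas : MeasurableSet T := (isOpen_lt (mvq_continuous M) continuous_const).measurableSet
  have hSmeas : MeasurableSet {x : EuclideanSpace ℝ (Fin n) | mvq M (x - x₀) < r ^ 2} :=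
    (isOpen_lt ((mvq_continuous M).comp (continuous_id.sub continuous_const))
      continuous_const).measurableSet
  have hI1 : (∫ x in {x : EuclideanSpace ℝ (Fin n) | mvq M (x - x₀) < r ^ 2}, u x)
      = ∫ x, ({x : EuclideanSpace ℝ (Fin n) | mvq M (x - x₀) < r ^ 2}).indicator u x :=
    (integral_indicator hSmeas).symm
  have hI2 : (∫ x, ({x : EuclideanSpace ℝ (Fin n) | mvq M (x - x₀) < r ^ 2}).indicator u x)
      = ∫ z, T.indicator (fun z => u (x₀ + z)) z := by
    rw [← integral_add_left_eq_self
      (({x : EuclideanSpace ℝ (Fin n) | mvq M (x - x₀) < r ^ 2}).indicator u) x₀]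
    apply integral_congr_ae
    filter_upwards with z
    by_cases hz : mvq M z < r ^ 2
    · rw [Set.indicator_of_mem (show z ∈ T from hz), Set.indicator_of_mem
        (show (x₀ + z) ∈ {x : EuclideanSpace ℝ (Fin n) | mvq M (x - x₀) < r ^ 2} from by
          simpa [add_sub_cancel_left] using hz)]
    · rw [Set.indicator_of_notMem (show z ∉ T from hz), Set.indicator_of_notMem
        (show (x₀ + z) ∉ {x : EuclideanSpace ℝ (Fin n) | mvq M (x - x₀) < r ^ 2} from by
          simpa [add_sub_cancel_left] using hz)]
  have hI3 : (∫ z, T.indicator (fun z => u (x₀ + z)) z)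
      = r ^ n * ∫ y : EuclideanSpace ℝ (Fin n), W.indicator (fun y => u (x₀ + r • y)) y := by
    have hcomp := MeasureTheory.Measure.integral_comp_smul_of_nonneg (μ := volume)
      (f := T.indicator (fun z => u (x₀ + z))) (R := r) (hR := hr0.le)
    have hfin : Module.finrank ℝ (EuclideanSpace ℝ (Fin n)) = n := finrank_euclideanSpace_fin
    rw [hfin] at hcomp
    have heq : (fun y : EuclideanSpace ℝ (Fin n) => T.indicator (fun z => u (x₀ + z)) (r • y))
        = fun y => W.indicator (fun y => u (x₀ + r • y)) y := by
      funext y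
      by_cases hy : mvq M y < 1
      · rw [Set.indicator_of_mem (show (r • y) ∈ T from by
          simp only [hTdef, Set.mem_setOf_eq, mvq_smul]
          nlinarith [mvq_nonneg hM y, pow_pos hr0 2]),
          Set.indicator_of_mem (show y ∈ W from hy)]
      · rw [Set.indicator_of_notMem (show (r • y) ∉ T from by
          simp only [hTdef, Set.mem_setOf_eq, mvq_smul, not_lt]
          push_neg at hy
          nlinarith [pow_pos hr0 2]),
          Set.indicator_of_notMem (show y ∉ W from hy)]
    rw [heq, smul_eq_mul] at hcomp
    rw [hcomp]
    have hrn : (0:ℝ) < r ^ n := pow_pos hr0 n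
    field_simp
  rw [hsetr, hI1, hI2, hI3, hkey]
  have hrn : (0:ℝ) < r ^ n := pow_pos hr0 n
  field_simp
end

section
/- (Proposition D, Cozzi–Farina–Valdinoci criterion.) Let n ≥ 2 and let H : ℝⁿ → ℝ be continuous, continuously differentiable on ℝⁿ \ {0}, with H(ξ) > 0 for all ξ ≠ 0 and H(tξ) = |t| H(ξ) for all t ∈ ℝ and ξ ∈ ℝⁿ. Assume the set K = {ξ ∈ ℝⁿ : H(ξ) < 1} is strictly convex, and let H*(x) = sup_{ξ ∈ K} ⟨x, ξ⟩ be its support function, assumed continuously differentiable on ℝⁿ \ {0}. Then the following are equivalent: (i) ⟨H(x)∇H(x), H*(y)∇H*(y)⟩ = ⟨x, y⟩ for all x, y ∈ ℝⁿ \ {0}; (ii) there exists a real symmetric positive definite n×n matrix M such that H(ξ) = √⟨Mξ, ξ⟩ for all ξ ∈ ℝⁿ. -/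
open scoped RealInnerProductSpace InnerProductSpace Gradient
open Set Filter Topology Bornology

/-!
Write `J f x = f x • ∇ f x` for the gradient of `f² / 2`. A positively homogeneous `H` whose
sublevel set `{H ≤ 1}` is convex is subadditive, so `⟪∇H x, ξ⟫ ≤ H ξ` for all `ξ`, with equality
at `ξ = x` by Euler's identity. Hence `H*(∇H x) = 1`, and `y ↦ H* y - ⟪y, x / H x⟫` attains its
minimum `0` at `y = ∇H x`, so `∇H*(∇H x) = x / H x`. By homogeneity, `J H* (J H x) = x` for
`x ≠ 0`.

If the Ferone–Kawohl identity `⟪J H x, J H* y⟫ = ⟪x, y⟫` holds, taking `y = J H w` shows that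
`J H` is symmetric for the inner product, hence linear, and `⟪J H ξ, ξ⟫ = H ξ²` makes its matrix
positive definite. Conversely, if `H² = ⟪M ·, ·⟫` then `J H = M`, and `J H* (M w) = w` gives
`⟪M x, J H* (M w)⟫ = ⟪x, M w⟫`.
-/

noncomputable section

namespace Anisotropic

section SymmetricMap

variable {𝕜 E : Type*} [RCLike 𝕜] [NormedAddCommGroup E] [InnerProductSpace 𝕜 E]

def symmetricLinearMap (f : E → E) (hf : ∀ x y, ⟪f x, y⟫_𝕜 = ⟪x, f y⟫_𝕜) : E →ₗ[𝕜] E where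
  toFun := f
  map_add' x y := ext_inner_right 𝕜 fun v => by
    rw [hf, inner_add_left, inner_add_left, hf, hf]
  map_smul' c x := ext_inner_right 𝕜 fun v => by
    rw [hf, RingHom.id_apply, inner_smul_left, inner_smul_left, hf]

theorem isSymmetric_symmetricLinearMap (f : E → E) (hf : ∀ x y, ⟪f x, y⟫_𝕜 = ⟪x, f y⟫_𝕜) :
    (symmetricLinearMap f hf).IsSymmetric :=
  hf

end SymmetricMap

theorem posDef_of_inner_toEuclideanLin_pos {n : Type*} [Fintype n] [DecidableEq n]
    {A : Matrix n n ℝ} (hA : A.toEuclideanLin.IsSymmetric)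
    (hpos : ∀ x : EuclideanSpace ℝ n, x ≠ 0 → 0 < ⟪A.toEuclideanLin x, x⟫) : A.PosDef := by
  refine .of_dotProduct_mulVec_pos (Matrix.isSymmetric_toEuclideanLin_iff.mp hA) fun v hv => ?_
  have := hpos (WithLp.toLp 2 v) (by simpa using hv)
  simpa [EuclideanSpace.inner_eq_star_dotProduct, Matrix.ofLp_toLpLin, dotProduct_comm] using this

section Homogeneous

variable {F : Type*} [NormedAddCommGroup F] [NormedSpace ℝ F]

def IsPosHomogeneous (f : F → ℝ) : Prop :=
  ∀ t : ℝ, 0 < t → ∀ x, f (t • x) = t * f x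

variable {H : F → ℝ}

theorem IsPosHomogeneous.map_zero (hH : IsPosHomogeneous H) : H 0 = 0 := by
  have := hH 2 two_pos 0
  rw [smul_zero] at this
  linarith

theorem IsPosHomogeneous.map_inv_smul_self (hH : IsPosHomogeneous H) {x : F} (hx : 0 < H x) :
    H ((H x)⁻¹ • x) = 1 := by
  rw [hH _ (inv_pos.2 hx), inv_mul_cancel₀ hx.ne']

theorem IsPosHomogeneous.nonneg (hH : IsPosHomogeneous H) (hpos : ∀ x, x ≠ 0 → 0 < H x) (x : F) :
    0 ≤ H x := by
  rcases eq_or_ne x 0 with rfl | hx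
  exacts [hH.map_zero.ge, (hpos x hx).le]

theorem IsPosHomogeneous.exists_pos_mul_norm_le [ProperSpace F] (hH : IsPosHomogeneous H)
    (hcont : Continuous H) (hpos : ∀ x, x ≠ 0 → 0 < H x) :
    ∃ m > 0, ∀ x, m * ‖x‖ ≤ H x := by
  rcases subsingleton_or_nontrivial F with hF | hF
  · exact ⟨1, one_pos, fun x => by simp [Subsingleton.elim x 0, hH.map_zero]⟩
  obtain ⟨z, hz, hmin⟩ := (isCompact_sphere (0 : F) 1).exists_isMinOn
    (NormedSpace.sphere_nonempty.2 zero_le_one) hcont.continuousOn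
  have hz0 : z ≠ 0 := ne_zero_of_mem_unit_sphere ⟨z, hz⟩
  refine ⟨H z, hpos z hz0, fun x => ?_⟩
  rcases eq_or_ne x 0 with rfl | hx
  · simp [hH.map_zero]
  have hnx : 0 < ‖x‖ := norm_pos_iff.2 hx
  have hu : ‖x‖⁻¹ • x ∈ Metric.sphere (0 : F) 1 := by
    simp [norm_smul, hnx.ne']
  calc H z * ‖x‖ ≤ H (‖x‖⁻¹ • x) * ‖x‖ := by gcongr; exact hmin hu
    _ = H x := by
      rw [hH _ (inv_pos.2 hnx), mul_comm, ← mul_assoc, mul_inv_cancel₀ hnx.ne', one_mul]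

theorem IsPosHomogeneous.isBounded_setOf_lt_one [ProperSpace F] (hH : IsPosHomogeneous H)
    (hcont : Continuous H) (hpos : ∀ x, x ≠ 0 → 0 < H x) :
    IsBounded {ξ | H ξ < 1} := by
  obtain ⟨m, hm, hmH⟩ := hH.exists_pos_mul_norm_le hcont hpos
  refine (Metric.isBounded_closedBall (x := (0 : F)) (r := m⁻¹)).subset
    fun ξ (hξ : H ξ < 1) => ?_
  rw [mem_closedBall_zero_iff, ← one_div, le_div_iff₀ hm]
  linarith [hmH ξ]

theorem IsPosHomogeneous.closure_setOf_lt_one (hH : IsPosHomogeneous H) (hcont : Continuous H) :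
    closure {ξ | H ξ < 1} = {ξ | H ξ ≤ 1} := by
  refine (closure_lt_subset_le hcont continuous_const).antisymm fun z (hz : H z ≤ 1) => ?_
  have hlim : Tendsto (fun t : ℝ => t • z) (𝓝[<] 1) (𝓝 z) := by
    simpa using (tendsto_nhdsWithin_of_tendsto_nhds (tendsto_id (x := 𝓝 (1 : ℝ)))).smul_const z
  refine mem_closure_of_tendsto hlim ?_
  filter_upwards [Ioo_mem_nhdsLT zero_lt_one] with t ⟨ht0, ht1⟩
  show H (t • z) < 1
  rw [hH t ht0]
  nlinarith

theorem IsPosHomogeneous.add_le (hH : IsPosHomogeneous H) (hpos : ∀ x, x ≠ 0 → 0 < H x)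
    (hconv : Convex ℝ {ξ | H ξ ≤ 1}) (a b : F) : H (a + b) ≤ H a + H b := by
  rcases eq_or_ne a 0 with rfl | ha
  · simp [hH.map_zero]
  rcases eq_or_ne b 0 with rfl | hb
  · simp [hH.map_zero]
  have hα := hpos a ha
  have hβ := hpos b hb
  have hsum : 0 < H a + H b := by positivity
  -- `(a + b) / (H a + H b)` is a convex combination of `a / H a` and `b / H b`.
  have hc := hconv (hH.map_inv_smul_self hα).le (hH.map_inv_smul_self hβ).le
    (div_pos hα hsum).le (div_pos hβ hsum).le (by field_simp)
  have hc_eq : (H a / (H a + H b)) • (H a)⁻¹ • a + (H b / (H a + H b)) • (H b)⁻¹ • b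
      = (H a + H b)⁻¹ • (a + b) := by
    rw [smul_smul, smul_smul, smul_add]
    congr 2 <;> field_simp
  have : (H a + H b)⁻¹ * H (a + b) ≤ 1 := by
    rw [← hH _ (inv_pos.2 hsum), ← hc_eq]; exact hc
  rwa [inv_mul_le_iff₀ hsum, mul_one] at this

end Homogeneous

section Gradient

variable {F : Type*} [NormedAddCommGroup F] [InnerProductSpace ℝ F] [CompleteSpace F] {H : F → ℝ}

theorem IsPosHomogeneous.inner_gradient_self (hH : IsPosHomogeneous H) {x : F}
    (hx : DifferentiableAt ℝ H x) : ⟪∇ H x, x⟫ = H x := by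
  have hray : HasDerivAt (fun t : ℝ => H (t • x)) (fderiv ℝ H x x) 1 :=
    hx.hasFDerivAt.comp_hasDerivAt_of_eq _
      (by simpa using (hasDerivAt_id (1 : ℝ)).smul_const x) (one_smul ℝ x).symm
  have hlin : HasDerivAt (fun t : ℝ => H (t • x)) (H x) 1 := by
    refine ((hasDerivAt_id (1 : ℝ)).mul_const (H x)).congr_of_eventuallyEq ?_
      |>.congr_deriv (one_mul _)
    filter_upwards [Ioi_mem_nhds one_pos] with t ht
    exact hH t ht x
  rw [inner_gradient_left]
  exact hray.unique hlin

theorem IsPosHomogeneous.gradient_ne_zero (hH : IsPosHomogeneous H) {x : F} (hx : H x ≠ 0)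
    (hdx : DifferentiableAt ℝ H x) : ∇ H x ≠ 0 := fun h =>
  hx (by rw [← hH.inner_gradient_self hdx, h, inner_zero_left])

theorem IsPosHomogeneous.inner_gradient_le (hH : IsPosHomogeneous H)
    (hsub : ∀ a b, H (a + b) ≤ H a + H b) {x : F} (hx : DifferentiableAt ℝ H x) (ξ : F) :
    ⟪∇ H x, ξ⟫ ≤ H ξ := by
  have hline : HasDerivAt (fun t : ℝ => H (x + t • ξ)) ⟪∇ H x, ξ⟫ 0 := by
    rw [inner_gradient_left]
    exact hx.hasFDerivAt.comp_hasDerivAt_of_eq _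
      (by simpa using ((hasDerivAt_id (0 : ℝ)).smul_const ξ).const_add x) (by simp)
  refine le_of_tendsto (hasDerivAt_iff_tendsto_slope.1 hline |>.mono_left
    (nhdsWithin_mono _ fun t (ht : t ∈ Ioi 0) => ne_of_gt ht)) ?_
  filter_upwards [self_mem_nhdsWithin] with t (ht : 0 < t)
  rw [slope_def_field]
  simp only [zero_smul, add_zero, sub_zero]
  rw [div_le_iff₀ ht]
  linarith [hsub x (t • ξ), hH t ht ξ]

theorem IsPosHomogeneous.gradient_smul (hH : IsPosHomogeneous H) {t : ℝ} (ht : 0 < t) (y : F) :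
    ∇ H (t • y) = ∇ H y := by
  have hcomp : fderiv ℝ (fun z => H (t • z)) y = t • fderiv ℝ H (t • y) := fderiv_comp_smul t
  have hfun : (fun z => H (t • z)) = t • H := funext (hH t ht)
  rw [hfun, fderiv_const_smul_field] at hcomp
  rw [gradient, gradient, (smul_right_injective _ ht.ne' hcomp :)]

theorem gradient_eq_of_inner_le {g : F → ℝ} {y₀ ξ : F} (hg : DifferentiableAt ℝ g y₀)
    (hle : ∀ y, ⟪y, ξ⟫ ≤ g y) (heq : g y₀ = ⟪y₀, ξ⟫) : ∇ g y₀ = ξ := by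
  have hmin : IsLocalMin (fun y => g y - ⟪y, ξ⟫) y₀ :=
    Eventually.of_forall fun y => by simp only [heq, sub_self, sub_nonneg, hle]
  have hderiv : HasFDerivAt (fun y => g y - ⟪y, ξ⟫) (fderiv ℝ g y₀ - innerSL ℝ ξ) y₀ :=
    hg.hasFDerivAt.sub <| (innerSL ℝ ξ).hasFDerivAt.congr_of_eventuallyEq
      (Eventually.of_forall fun y => real_inner_comm ξ y)
  have hzero := sub_eq_zero.1 (hmin.hasFDerivAt_eq_zero hderiv)
  refine ext_inner_right ℝ fun v => ?_
  rw [inner_gradient_left, hzero, innerSL_apply_apply]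

def dualityMap (f : F → ℝ) (x : F) : F :=
  f x • ∇ f x

end Gradient

section Support

variable {F : Type*} [NormedAddCommGroup F] [InnerProductSpace ℝ F]

def supportFunction (K : Set F) (y : F) : ℝ :=
  sSup ((fun ξ => ⟪y, ξ⟫) '' K)

variable {K : Set F}

theorem isPosHomogeneous_supportFunction (K : Set F) : IsPosHomogeneous (supportFunction K) := by
  intro t ht y
  rw [supportFunction, supportFunction, ← smul_eq_mul, ← Real.sSup_smul_of_nonneg ht.le,
    ← image_smul, image_image]
  simp only [real_inner_smul_left, smul_eq_mul]

theorem inner_le_supportFunction_of_mem_closure (hK : IsBounded K) {ξ : F} (hξ : ξ ∈ closure K)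
    (y : F) :
    ⟪y, ξ⟫ ≤ supportFunction K y := by
  have hbdd : BddAbove ((fun ξ => ⟪y, ξ⟫) '' K) :=
    ((innerSL ℝ y).lipschitz.isBounded_image hK).bddAbove
  exact closure_minimal (t := {ξ | ⟪y, ξ⟫ ≤ supportFunction K y})
    (fun ξ hξ => le_csSup hbdd (mem_image_of_mem _ hξ))
    (isClosed_le (continuous_const.inner continuous_id) continuous_const) hξ

theorem supportFunction_le (hK : K.Nonempty) {y : F} {c : ℝ} (h : ∀ ξ ∈ K, ⟪y, ξ⟫ ≤ c) :
    supportFunction K y ≤ c :=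
  csSup_le (hK.image _) (forall_mem_image.2 h)

theorem IsPosHomogeneous.inner_le_supportFunction [ProperSpace F] {H : F → ℝ}
    (hH : IsPosHomogeneous H) (hcont : Continuous H) (hpos : ∀ x, x ≠ 0 → 0 < H x) {ξ : F}
    (hξ : H ξ ≤ 1) (y : F) :
    ⟪y, ξ⟫ ≤ supportFunction {ξ | H ξ < 1} y :=
  inner_le_supportFunction_of_mem_closure (hH.isBounded_setOf_lt_one hcont hpos)
    (by rwa [hH.closure_setOf_lt_one hcont]) y

end Support

section Duality

variable {F : Type*} [NormedAddCommGroup F] [InnerProductSpace ℝ F] [ProperSpace F] {H : F → ℝ}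

theorem IsPosHomogeneous.supportFunction_gradient (hH : IsPosHomogeneous H)
    (hcont : Continuous H) (hpos : ∀ x, x ≠ 0 → 0 < H x) (hsub : ∀ a b, H (a + b) ≤ H a + H b)
    {x : F} (hx : x ≠ 0) (hdx : DifferentiableAt ℝ H x) :
    supportFunction {ξ | H ξ < 1} (∇ H x) = 1 := by
  refine le_antisymm (supportFunction_le ⟨0, by simp [hH.map_zero]⟩
    fun ξ hξ => (hH.inner_gradient_le hsub hdx ξ).trans (le_of_lt hξ)) ?_
  have hHx := hpos x hx
  calc (1 : ℝ) = ⟪∇ H x, (H x)⁻¹ • x⟫ := by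
        rw [real_inner_smul_right, hH.inner_gradient_self hdx, inv_mul_cancel₀ hHx.ne']
    _ ≤ _ := hH.inner_le_supportFunction hcont hpos (hH.map_inv_smul_self hHx).le _

theorem IsPosHomogeneous.gradient_supportFunction_gradient (hH : IsPosHomogeneous H)
    (hcont : Continuous H) (hpos : ∀ x, x ≠ 0 → 0 < H x) (hsub : ∀ a b, H (a + b) ≤ H a + H b)
    {x : F} (hx : x ≠ 0) (hdx : DifferentiableAt ℝ H x)
    (hdσ : DifferentiableAt ℝ (supportFunction {ξ | H ξ < 1}) (∇ H x)) :
    ∇ (supportFunction {ξ | H ξ < 1}) (∇ H x) = (H x)⁻¹ • x := by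
  have hHx := hpos x hx
  refine gradient_eq_of_inner_le hdσ (fun y => ?_) ?_
  · exact hH.inner_le_supportFunction hcont hpos (hH.map_inv_smul_self hHx).le y
  · rw [hH.supportFunction_gradient hcont hpos hsub hx hdx, real_inner_smul_right,
      hH.inner_gradient_self hdx, inv_mul_cancel₀ hHx.ne']

theorem IsPosHomogeneous.dualityMap_supportFunction_dualityMap (hH : IsPosHomogeneous H)
    (hcont : Continuous H) (hpos : ∀ x, x ≠ 0 → 0 < H x) (hsub : ∀ a b, H (a + b) ≤ H a + H b)
    {x : F} (hx : x ≠ 0) (hdx : DifferentiableAt ℝ H x)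
    (hdσ : ∀ y, y ≠ 0 → DifferentiableAt ℝ (supportFunction {ξ | H ξ < 1}) y) :
    dualityMap (supportFunction {ξ | H ξ < 1}) (dualityMap H x) = x := by
  have hHx := hpos x hx
  have hdσx := hdσ _ (hH.gradient_ne_zero hHx.ne' hdx)
  rw [dualityMap, dualityMap, isPosHomogeneous_supportFunction _ _ hHx,
    (isPosHomogeneous_supportFunction _).gradient_smul hHx,
    hH.supportFunction_gradient hcont hpos hsub hx hdx,
    hH.gradient_supportFunction_gradient hcont hpos hsub hx hdx hdσx, mul_one, smul_smul,
    mul_inv_cancel₀ hHx.ne', one_smul]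

end Duality

section FeroneKawohl

variable {F : Type*} [NormedAddCommGroup F] [InnerProductSpace ℝ F] [CompleteSpace F] {H G : F → ℝ}

theorem dualityMap_zero (h : H 0 = 0) : dualityMap H 0 = 0 := by
  simp [dualityMap, h]

theorem IsPosHomogeneous.inner_dualityMap_self (hH : IsPosHomogeneous H) {x : F}
    (hx : DifferentiableAt ℝ H x) : ⟪dualityMap H x, x⟫ = H x ^ 2 := by
  rw [dualityMap, real_inner_smul_left, hH.inner_gradient_self hx, sq]

theorem IsPosHomogeneous.inner_dualityMap_symm (hH : IsPosHomogeneous H)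
    (hpos : ∀ x, x ≠ 0 → 0 < H x) (hdH : ∀ x, x ≠ 0 → DifferentiableAt ℝ H x)
    (hinv : ∀ x, x ≠ 0 → dualityMap G (dualityMap H x) = x)
    (hFK : ∀ x y, x ≠ 0 → y ≠ 0 → ⟪dualityMap H x, dualityMap G y⟫ = ⟪x, y⟫) (x w : F) :
    ⟪dualityMap H x, w⟫ = ⟪x, dualityMap H w⟫ := by
  rcases eq_or_ne x 0 with rfl | hx
  · simp [dualityMap_zero hH.map_zero]
  rcases eq_or_ne w 0 with rfl | hw
  · simp [dualityMap_zero hH.map_zero]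
  have hJw : dualityMap H w ≠ 0 := fun h => by
    have := hH.inner_dualityMap_self (hdH w hw)
    rw [h, inner_zero_left] at this
    exact (pow_pos (hpos w hw) 2).ne this
  simpa only [hinv w hw] using hFK x _ hx hJw

theorem IsPosHomogeneous.exists_isSymmetric_inner_self_eq_sq (hH : IsPosHomogeneous H)
    (hpos : ∀ x, x ≠ 0 → 0 < H x) (hdH : ∀ x, x ≠ 0 → DifferentiableAt ℝ H x)
    (hinv : ∀ x, x ≠ 0 → dualityMap G (dualityMap H x) = x)
    (hFK : ∀ x y, x ≠ 0 → y ≠ 0 → ⟪dualityMap H x, dualityMap G y⟫ = ⟪x, y⟫) :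
    ∃ T : F →ₗ[ℝ] F, T.IsSymmetric ∧ ∀ ξ, ⟪T ξ, ξ⟫ = H ξ ^ 2 := by
  have hsymm := hH.inner_dualityMap_symm hpos hdH hinv hFK
  refine ⟨symmetricLinearMap _ hsymm, isSymmetric_symmetricLinearMap _ hsymm, fun ξ => ?_⟩
  rcases eq_or_ne ξ 0 with rfl | hξ
  · simp [hH.map_zero]
  · exact hH.inner_dualityMap_self (hdH ξ hξ)

theorem dualityMap_eq_of_inner_self_eq_sq [FiniteDimensional ℝ F] {T : F →ₗ[ℝ] F}
    (hT : T.IsSymmetric) (hTH : ∀ ξ, ⟪T ξ, ξ⟫ = H ξ ^ 2) {x : F} (hx : DifferentiableAt ℝ H x) :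
    dualityMap H x = T x := by
  let T' := LinearMap.toContinuousLinearMap T
  have hsq : HasFDerivAt (fun ξ => H ξ ^ 2) ((2 * H x) • fderiv ℝ H x) x := by
    simpa using hx.hasFDerivAt.pow 2
  have hQ : HasFDerivAt (fun ξ => H ξ ^ 2)
      ((fderivInnerCLM ℝ (T x, x)).comp (T'.prod (ContinuousLinearMap.id ℝ F))) x := by
    simp_rw [← hTH]
    exact T'.hasFDerivAt.inner ℝ (hasFDerivAt_id x)
  refine ext_inner_right ℝ fun v => ?_
  have hv : 2 * H x * fderiv ℝ H x v = ⟪T x, v⟫ + ⟪T v, x⟫ := by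
    simpa [T'] using congr($(hsq.unique hQ) v)
  rw [hT v x, real_inner_comm (T x) v] at hv
  rw [dualityMap, real_inner_smul_left, inner_gradient_left]
  linarith

theorem inner_dualityMap_eq_of_isSymmetric [FiniteDimensional ℝ F] {T : F →ₗ[ℝ] F}
    (hT : T.IsSymmetric) (hTH : ∀ ξ, ⟪T ξ, ξ⟫ = H ξ ^ 2) (hpos : ∀ x, x ≠ 0 → 0 < H x)
    (hdH : ∀ x, x ≠ 0 → DifferentiableAt ℝ H x)
    (hinv : ∀ x, x ≠ 0 → dualityMap G (dualityMap H x) = x) {x y : F} (hx : x ≠ 0) (hy : y ≠ 0) :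
    ⟪dualityMap H x, dualityMap G y⟫ = ⟪x, y⟫ := by
  have hJ : ∀ ξ, ξ ≠ 0 → dualityMap H ξ = T ξ := fun ξ hξ =>
    dualityMap_eq_of_inner_self_eq_sq hT hTH (hdH ξ hξ)
  have hTinj : Function.Injective T := by
    refine (injective_iff_map_eq_zero T).2 fun w hw => ?_
    by_contra hw0
    have := hTH w
    rw [hw, inner_zero_left] at this
    exact (pow_pos (hpos w hw0) 2).ne this
  obtain ⟨w, rfl⟩ := LinearMap.injective_iff_surjective.1 hTinj y
  have hw : w ≠ 0 := by
    rintro rfl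
    exact hy (map_zero T)
  rw [← hJ w hw, hinv w hw, hJ x hx, hJ w hw]
  exact hT x w

end FeroneKawohl

end Anisotropic

end

open Anisotropic in
theorem stmt_17_general {n : ℕ}
    (H : EuclideanSpace ℝ (Fin n) → ℝ) (hHcont : Continuous H)
    (hH1 : ContDiffOn ℝ 1 H ({0}ᶜ : Set (EuclideanSpace ℝ (Fin n))))
    (hHpos : ∀ ξ : EuclideanSpace ℝ (Fin n), ξ ≠ 0 → 0 < H ξ)
    (hHhom : ∀ (t : ℝ) (ξ : EuclideanSpace ℝ (Fin n)), H (t • ξ) = |t| * H ξ)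
    (K : Set (EuclideanSpace ℝ (Fin n))) (hK : K = {ξ | H ξ < 1})
    (hKconv : StrictConvex ℝ (closure K))
    (Hs : EuclideanSpace ℝ (Fin n) → ℝ)
    (hHs : Hs = fun x => sSup ((fun ξ => ⟪x, ξ⟫) '' K))
    (hHs1 : ContDiffOn ℝ 1 Hs ({0}ᶜ : Set (EuclideanSpace ℝ (Fin n)))) :
    (∀ x y : EuclideanSpace ℝ (Fin n), x ≠ 0 → y ≠ 0 →
        ⟪H x • gradient H x, Hs y • gradient Hs y⟫ = ⟪x, y⟫)
      ↔ ∃ M : Matrix (Fin n) (Fin n) ℝ, M.PosDef ∧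
          ∀ ξ : EuclideanSpace ℝ (Fin n), H ξ = Real.sqrt ⟪Matrix.toEuclideanLin M ξ, ξ⟫ := by
  subst hK
  obtain rfl : Hs = supportFunction {ξ | H ξ < 1} := hHs
  have hH : IsPosHomogeneous H := fun t ht ξ => by rw [hHhom, abs_of_pos ht]
  have hsub := hH.add_le hHpos (hH.closure_setOf_lt_one hHcont ▸ hKconv.convex)
  have hdH : ∀ x, x ≠ 0 → DifferentiableAt ℝ H x := fun x hx =>
    (hH1.differentiableOn one_ne_zero).differentiableAt (isOpen_compl_singleton.mem_nhds hx)
  have hdHs : ∀ y, y ≠ 0 → DifferentiableAt ℝ (supportFunction {ξ | H ξ < 1}) y := fun y hy =>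
    (hHs1.differentiableOn one_ne_zero).differentiableAt (isOpen_compl_singleton.mem_nhds hy)
  have hinv : ∀ x, x ≠ 0 → dualityMap (supportFunction {ξ | H ξ < 1}) (dualityMap H x) = x :=
    fun x hx => hH.dualityMap_supportFunction_dualityMap hHcont hHpos hsub hx (hdH x hx) hdHs
  constructor
  · intro hFK
    obtain ⟨T, hT, hTH⟩ := hH.exists_isSymmetric_inner_self_eq_sq hHpos hdH hinv hFK
    have hTM : Matrix.toEuclideanLin (Matrix.toEuclideanLin.symm T) = T :=
      LinearEquiv.apply_symm_apply _ T
    refine ⟨_, posDef_of_inner_toEuclideanLin_pos (hTM ▸ hT) fun ξ hξ => ?_, fun ξ => ?_⟩ <;>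
      rw [hTM, hTH]
    exacts [pow_pos (hHpos ξ hξ) 2, (Real.sqrt_sq (hH.nonneg hHpos ξ)).symm]
  · rintro ⟨M, hM, hMH⟩ x y hx hy
    have hMpos := Matrix.isPositive_toEuclideanLin_iff.2 hM.posSemidef
    refine inner_dualityMap_eq_of_isSymmetric hMpos.isSymmetric (fun ξ => ?_) hHpos hdH hinv hx hy
    rw [hMH, Real.sq_sqrt (hMpos.inner_nonneg_left ξ)]

/-- Proposition D, Cozzi–Farina–Valdinoci criterion: Let `H : ℝⁿ → ℝ` be
continuous, `C¹` on `ℝⁿ \ {0}`, positive away from the origin and absolutely 1-homogeneous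
(`H(tξ) = |t| H(ξ)`). Assume `K = {ξ : H(ξ) < 1}` is strictly convex (every interior point
of a segment between two distinct points of the closure of `K` lies in the interior of
`K`), and let `H*(x) = sup_{ξ ∈ K} ⟨x, ξ⟩` be its support function, assumed `C¹` on
`ℝⁿ \ {0}`. Then the Ferone–Kawohl condition
`⟨H(x)∇H(x), H*(y)∇H*(y)⟩ = ⟨x, y⟩` for all `x, y ≠ 0` is equivalent to the existence of a
real symmetric positive definite matrix `M` with `H(ξ) = √⟨Mξ, ξ⟩` for all `ξ`. -/
theorem stmt_17 {n : ℕ} (hn : 2 ≤ n)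
    (H : EuclideanSpace ℝ (Fin n) → ℝ) (hHcont : Continuous H)
    (hH1 : ContDiffOn ℝ 1 H ({0}ᶜ : Set (EuclideanSpace ℝ (Fin n))))
    (hHpos : ∀ ξ : EuclideanSpace ℝ (Fin n), ξ ≠ 0 → 0 < H ξ)
    (hHhom : ∀ (t : ℝ) (ξ : EuclideanSpace ℝ (Fin n)), H (t • ξ) = |t| * H ξ)
    (K : Set (EuclideanSpace ℝ (Fin n))) (hK : K = {ξ | H ξ < 1})
    (hKconv : StrictConvex ℝ (closure K))
    (Hs : EuclideanSpace ℝ (Fin n) → ℝ)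
    (hHs : Hs = fun x => sSup ((fun ξ => ⟪x, ξ⟫) '' K))
    (hHs1 : ContDiffOn ℝ 1 Hs ({0}ᶜ : Set (EuclideanSpace ℝ (Fin n)))) :
    (∀ x y : EuclideanSpace ℝ (Fin n), x ≠ 0 → y ≠ 0 →
        ⟪H x • gradient H x, Hs y • gradient Hs y⟫ = ⟪x, y⟫)
      ↔ ∃ M : Matrix (Fin n) (Fin n) ℝ, M.PosDef ∧
          ∀ ξ : EuclideanSpace ℝ (Fin n), H ξ = Real.sqrt ⟪Matrix.toEuclideanLin M ξ, ξ⟫ :=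
  stmt_17_general H hHcont hH1 hHpos hHhom K hK hKconv Hs hHs hHs1
end
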